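/- arXiv:1702.01718 — 12 statements merged into one kernel-verified Lean document; each statement's English description precedes it below -/
import Mathlib

section
/- Let y_1, …, y_{N−1} solve the periodic semi-discrete FtL system, let k ∈ ℝ, let j ∈ {1,…,N−1}, and let t > 0 be a time with y_j(t) ≠ k. Then the function s ↦ (y_j(s) − k)^+ is differentiable at t and its derivative at t is at most (1/ℓ)[H(y_{j+1}(t) − k)(V(y_{j+1}(t)) − V(k)) − H(y_j(t) − k)(V(y_j(t)) − V(k))]. -/
/-- `y j`, `j = 1, …, N-1`, solves the periodic semi-discrete Follow-the-Leader
system `ẏ_j(t) = (1/ℓ)(V(y_{j+1}(t)) − V(y_j(t)))` on `[0, ∞)`, with the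
periodic convention `y_N := y_1`. -/
def IsFtLSolution (N : ℕ) (ℓ : ℝ) (V : ℝ → ℝ) (y : ℕ → ℝ → ℝ) : Prop :=
  (∀ t : ℝ, y N t = y 1 t) ∧
  ∀ j ∈ Finset.Icc 1 (N - 1), ∀ t ∈ Set.Ici (0 : ℝ),
    HasDerivWithinAt (y j) (1 / ℓ * (V (y (j + 1) t) - V (y j t))) (Set.Ici (0 : ℝ)) t

/-- The Heaviside function: `H(r) = 0` for `r ≤ 0` and `H(r) = 1` for `r > 0`. -/
noncomputable def heaviside (r : ℝ) : ℝ := if 0 < r then 1 else 0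

/-
Away from the level `k` the positive part `(y_j - k)⁺` coincides near `t` either with `0` or
with `y_j - k`, so it is differentiable with derivative `H(y_j(t) - k) ẏ_j(t)`. The bound is then
the pointwise Kato-type inequality
`H(a - k)(V(b) - V(a)) ≤ H(b - k)(V(b) - V(k)) - H(a - k)(V(a) - V(k))`,
valid for every nondecreasing `V` by a case split on the signs of `a - k` and `b - k`.
-/

lemma heaviside_of_pos {r : ℝ} (hr : 0 < r) : heaviside r = 1 := if_pos hr

lemma heaviside_of_nonpos {r : ℝ} (hr : r ≤ 0) : heaviside r = 0 := if_neg hr.not_gt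

lemma HasDerivAt.max_zero_of_ne {f : ℝ → ℝ} {f' t : ℝ} (hf : HasDerivAt f f' t)
    (hne : f t ≠ 0) : HasDerivAt (fun s => max (f s) 0) (heaviside (f t) * f') t := by
  rcases hne.lt_or_gt with hneg | hpos
  · have hzero : (fun s => max (f s) 0) =ᶠ[nhds t] fun _ => (0 : ℝ) := by
      filter_upwards [hf.continuousAt.eventually (gt_mem_nhds hneg)] with s hs
      exact max_eq_right hs.le
    rw [heaviside_of_nonpos hneg.le, zero_mul]
    exact (hasDerivAt_const t 0).congr_of_eventuallyEq hzero
  · have hself : (fun s => max (f s) 0) =ᶠ[nhds t] f := by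
      filter_upwards [hf.continuousAt.eventually (lt_mem_nhds hpos)] with s hs
      exact max_eq_left hs.le
    rw [heaviside_of_pos hpos, one_mul]
    exact hf.congr_of_eventuallyEq hself

lemma Monotone.heaviside_mul_sub_le {V : ℝ → ℝ} (hV : Monotone V) (a b k : ℝ) :
    heaviside (a - k) * (V b - V a) ≤
      heaviside (b - k) * (V b - V k) - heaviside (a - k) * (V a - V k) := by
  rcases le_or_gt (a - k) 0 with ha | ha <;> rcases le_or_gt (b - k) 0 with hb | hb
  · simp [heaviside_of_nonpos ha, heaviside_of_nonpos hb]
  · simp only [heaviside_of_nonpos ha, heaviside_of_pos hb]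
    linarith [hV (show k ≤ b by linarith)]
  · simp only [heaviside_of_pos ha, heaviside_of_nonpos hb]
    linarith [hV (show b ≤ k by linarith)]
  · simp only [heaviside_of_pos ha, heaviside_of_pos hb]
    linarith

theorem ftl_positive_part_entropy_inequality_general
    (N : ℕ) (ℓ : ℝ) (hℓ : 0 < ℓ)
    (V : ℝ → ℝ) (hVmono : Monotone V)
    (y : ℕ → ℝ → ℝ) (hy : IsFtLSolution N ℓ V y)
    (k : ℝ) (j : ℕ) (hj : j ∈ Finset.Icc 1 (N - 1))
    (t : ℝ) (ht : 0 < t) (hne : y j t ≠ k) :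
    ∃ d : ℝ, HasDerivAt (fun s => max (y j s - k) 0) d t ∧
      d ≤ 1 / ℓ * (heaviside (y (j + 1) t - k) * (V (y (j + 1) t) - V k)
            - heaviside (y j t - k) * (V (y j t) - V k)) := by
  have hderiv := (hy.2 j hj t ht.le).hasDerivAt (Ici_mem_nhds ht)
  refine ⟨_, (hderiv.sub_const k).max_zero_of_ne (sub_ne_zero.2 hne), ?_⟩
  rw [mul_left_comm]
  exact mul_le_mul_of_nonneg_left (hVmono.heaviside_mul_sub_le _ _ k) (by positivity)

/-- If `y` solves the periodic semi-discrete FtL system, `k ∈ ℝ`,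
`j ∈ {1,…,N−1}` and `t > 0` with `y_j(t) ≠ k`, then `s ↦ (y_j(s) − k)⁺` is
differentiable at `t` with derivative at most
`(1/ℓ)[H(y_{j+1}(t) − k)(V(y_{j+1}(t)) − V(k)) − H(y_j(t) − k)(V(y_j(t)) − V(k))]`. -/
theorem ftl_positive_part_entropy_inequality
    (N : ℕ) (hN : 2 ≤ N) (ℓ : ℝ) (hℓ : 0 < ℓ)
    (V : ℝ → ℝ) (LV : NNReal) (hVlip : LipschitzWith LV V) (hVmono : Monotone V)
    (y : ℕ → ℝ → ℝ) (hy : IsFtLSolution N ℓ V y)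
    (k : ℝ) (j : ℕ) (hj : j ∈ Finset.Icc 1 (N - 1))
    (t : ℝ) (ht : 0 < t) (hne : y j t ≠ k) :
    ∃ d : ℝ, HasDerivAt (fun s => max (y j s - k) 0) d t ∧
      d ≤ 1 / ℓ * (heaviside (y (j + 1) t - k) * (V (y (j + 1) t) - V k)
            - heaviside (y j t - k) * (V (y j t) - V k)) :=
  ftl_positive_part_entropy_inequality_general N ℓ hℓ V hVmono y hy k j hj t ht hne
end

section
/- Let y_1, …, y_{N−1} solve the periodic semi-discrete FtL system, let k ∈ ℝ, let j ∈ {1,…,N−1}, and let t > 0 be a time with y_j(t) ≠ k. Then the function s ↦ |y_j(s) − k| is differentiable at t and its derivative at t is at most (1/ℓ)[sgn(y_{j+1}(t) − k)(V(y_{j+1}(t)) − V(k)) − sgn(y_j(t) − k)(V(y_j(t)) − V(k))]. -/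
namespace Real

theorem signType_sign_eq_sign (r : ℝ) : (SignType.sign r : ℝ) = Real.sign r := by
  rcases lt_trichotomy r 0 with h | rfl | h
  · simp [h, Real.sign_of_neg h]
  · simp [Real.sign_zero]
  · simp [h, Real.sign_of_pos h]

theorem sign_mul_le_abs (r x : ℝ) : Real.sign r * x ≤ |x| := by
  rcases Real.sign_apply_eq r with h | h | h <;> rw [h]
  · linarith [neg_abs_le x]
  · simp
  · linarith [le_abs_self x]

end Real

theorem HasDerivAt.abs_sub_const {f : ℝ → ℝ} {f' t : ℝ} (hf : HasDerivAt f f' t) {k : ℝ}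
    (hk : f t ≠ k) : HasDerivAt (fun s => |f s - k|) (Real.sign (f t - k) * f') t := by
  rw [← Real.signType_sign_eq_sign]
  exact (hasDerivAt_abs (sub_ne_zero.mpr hk)).comp t (hf.sub_const k)

noncomputable def kruzkovFlux (V : ℝ → ℝ) (k y : ℝ) : ℝ :=
  Real.sign (y - k) * (V y - V k)

theorem Monotone.kruzkovFlux_eq_abs {V : ℝ → ℝ} (hV : Monotone V) (k y : ℝ) :
    kruzkovFlux V k y = |V y - V k| := by
  rcases lt_trichotomy y k with h | rfl | h
  · rw [kruzkovFlux, Real.sign_of_neg (sub_neg.mpr h), abs_of_nonpos (sub_nonpos.mpr (hV h.le))]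
    ring
  · simp [kruzkovFlux]
  · rw [kruzkovFlux, Real.sign_of_pos (sub_pos.mpr h), abs_of_nonneg (sub_nonneg.mpr (hV h.le))]
    ring

theorem Monotone.sign_mul_sub_le_kruzkovFlux_sub {V : ℝ → ℝ} (hV : Monotone V) (k a b : ℝ) :
    Real.sign (a - k) * (V b - V a) ≤ kruzkovFlux V k b - kruzkovFlux V k a := by
  have hb : Real.sign (a - k) * (V b - V k) ≤ kruzkovFlux V k b :=
    hV.kruzkovFlux_eq_abs k b ▸ Real.sign_mul_le_abs _ _
  linarith [show kruzkovFlux V k a = Real.sign (a - k) * (V a - V k) from rfl]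

theorem ftl_kruzkov_entropy_inequality_general
    (N : ℕ) (ℓ : ℝ) (hℓ : 0 < ℓ)
    (V : ℝ → ℝ) (hVmono : Monotone V)
    (y : ℕ → ℝ → ℝ) (hy : IsFtLSolution N ℓ V y)
    (k : ℝ) (j : ℕ) (hj : j ∈ Finset.Icc 1 (N - 1))
    (t : ℝ) (ht : 0 < t) (hne : y j t ≠ k) :
    ∃ d : ℝ, HasDerivAt (fun s => |y j s - k|) d t ∧
      d ≤ 1 / ℓ * (Real.sign (y (j + 1) t - k) * (V (y (j + 1) t) - V k)
            - Real.sign (y j t - k) * (V (y j t) - V k)) := by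
  have hderiv : HasDerivAt (y j) (1 / ℓ * (V (y (j + 1) t) - V (y j t))) t :=
    (hy.2 j hj t ht.le).hasDerivAt (Ici_mem_nhds ht)
  refine ⟨_, hderiv.abs_sub_const hne, ?_⟩
  calc Real.sign (y j t - k) * (1 / ℓ * (V (y (j + 1) t) - V (y j t)))
      = 1 / ℓ * (Real.sign (y j t - k) * (V (y (j + 1) t) - V (y j t))) := by ring
    _ ≤ 1 / ℓ * (kruzkovFlux V k (y (j + 1) t) - kruzkovFlux V k (y j t)) :=
        mul_le_mul_of_nonneg_left (hVmono.sign_mul_sub_le_kruzkovFlux_sub k _ _)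
          (one_div_nonneg.mpr hℓ.le)

/-- If `y` solves the periodic semi-discrete FtL system, `k ∈ ℝ`,
`j ∈ {1,…,N−1}` and `t > 0` with `y_j(t) ≠ k`, then `s ↦ |y_j(s) − k|` is
differentiable at `t` with derivative at most
`(1/ℓ)[sgn(y_{j+1}(t) − k)(V(y_{j+1}(t)) − V(k)) − sgn(y_j(t) − k)(V(y_j(t)) − V(k))]`. -/
theorem ftl_kruzkov_entropy_inequality
    (N : ℕ) (hN : 2 ≤ N) (ℓ : ℝ) (hℓ : 0 < ℓ)
    (V : ℝ → ℝ) (LV : NNReal) (hVlip : LipschitzWith LV V) (hVmono : Monotone V)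
    (y : ℕ → ℝ → ℝ) (hy : IsFtLSolution N ℓ V y)
    (k : ℝ) (j : ℕ) (hj : j ∈ Finset.Icc 1 (N - 1))
    (t : ℝ) (ht : 0 < t) (hne : y j t ≠ k) :
    ∃ d : ℝ, HasDerivAt (fun s => |y j s - k|) d t ∧
      d ≤ 1 / ℓ * (Real.sign (y (j + 1) t - k) * (V (y (j + 1) t) - V k)
            - Real.sign (y j t - k) * (V (y j t) - V k)) :=
  ftl_kruzkov_entropy_inequality_general N ℓ hℓ V hVmono y hy k j hj t ht hne
end

section
/- Let y_1, …, y_{N−1} solve the periodic semi-discrete FtL system and let k ∈ ℝ. Then the function t ↦ Σ_{j=1}^{N−1} (y_j(t) − k)^+ is nonincreasing on [0,∞), and likewise t ↦ Σ_{j=1}^{N−1} (y_j(t) − k)^− is nonincreasing on [0,∞). -/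
/-!
Write `W = V / ℓ`, which is nondecreasing. At a time `x`, the right upper Dini derivative of
`(y_j - k)⁺` is at most `W (max (y_{j+1} x) k) - W (max (y_j x) k)`: below the level `k` the
positive part is locally zero, above it moves with `y_j`, and on the level it moves with the
positive part of `ẏ_j`. These bounds telescope to zero around the periodic ring, so the sum has
nonpositive Dini derivative and is nonincreasing. The negative parts are the positive parts of
`-y`, which solves the same kind of system with the nondecreasing `u ↦ -W (-u)` and level `-k`.
-/

open Set Filter Topology

theorem slope_finsetSum {ι 𝕜 E : Type*} [Field 𝕜] [AddCommGroup E] [Module 𝕜 E]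
    (s : Finset ι) (f : ι → 𝕜 → E) (a b : 𝕜) :
    slope (fun t => ∑ i ∈ s, f i t) a b = ∑ i ∈ s, slope (f i) a b := by
  simp only [slope_def_module, ← Finset.smul_sum, Finset.sum_sub_distrib]

theorem Finset.sum_Icc_sub_eq_zero_of_eq {M : Type*} [AddCommGroup M] {f : ℕ → M} {N : ℕ}
    (h : f N = f 1) : ∑ j ∈ Finset.Icc 1 (N - 1), (f (j + 1) - f j) = 0 := by
  rcases le_or_gt N 1 with hN | hN
  · rw [Finset.Icc_eq_empty (by omega), Finset.sum_empty]
  · rw [Finset.sum_Icc_sub (by omega), Nat.sub_add_cancel hN.le, h, sub_self]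

theorem antitoneOn_of_frequently_slope_lt {f : ℝ → ℝ} {s : Set ℝ} [s.OrdConnected]
    (hf : ContinuousOn f s) (h : ∀ x ∈ s, ∀ r > 0, ∃ᶠ z in 𝓝[>] x, slope f x z < r) :
    AntitoneOn f s := by
  intro a ha b hb hab
  have hsub : Icc a b ⊆ s := Set.OrdConnected.out ‹_› ha hb
  exact image_le_of_liminf_slope_right_le_deriv_boundary (B := fun _ => f a) (hf.mono hsub)
    le_rfl continuousOn_const (fun x _ => hasDerivWithinAt_const x _ (f a))
    (fun x hx => h x (hsub (Ico_subset_Icc_self hx))) ⟨hab, le_rfl⟩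

theorem eventually_slope_max_sub_zero_lt {g : ℝ → ℝ} {d x k c : ℝ}
    (hg : HasDerivWithinAt g d (Ioi x) x) (hd : k ≤ g x → d < c) (hc : g x ≤ k → 0 < c) :
    ∀ᶠ z in 𝓝[>] x, slope (fun t => max (g t - k) 0) x z < c := by
  have hslope : Tendsto (slope g x) (𝓝[>] x) (𝓝 d) :=
    (hasDerivWithinAt_iff_tendsto_slope' (lt_irrefl x)).1 hg
  have hcont : Tendsto g (𝓝[>] x) (𝓝 (g x)) := hg.continuousWithinAt
  rcases lt_trichotomy (g x) k with hlt | heq | hgt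
  · filter_upwards [hcont (Iio_mem_nhds hlt)] with z (hz : g z < k)
    rw [slope_def_field, max_eq_right (by linarith), max_eq_right (by linarith), sub_self,
      zero_div]
    exact hc hlt.le
  · filter_upwards [(hslope.max tendsto_const_nhds).eventually_lt_const
      (max_lt (hd heq.ge) (hc heq.le)), self_mem_nhdsWithin] with z hz (hxz : x < z)
    rwa [slope_def_field, ← heq, sub_self, max_self, sub_zero,
      ← max_div_div_right (sub_pos.2 hxz).le, zero_div, ← slope_def_field]
  · filter_upwards [hslope.eventually_lt_const (hd hgt.le), hcont (Ioi_mem_nhds hgt)]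
      with z hz (hz' : k < g z)
    rwa [slope_def_field, max_eq_left (by linarith), max_eq_left (by linarith),
      sub_sub_sub_cancel_right, ← slope_def_field]

theorem antitoneOn_sum_max_sub_zero_of_periodic {N : ℕ} {W : ℝ → ℝ} (hW : Monotone W)
    {y : ℕ → ℝ → ℝ} {a : ℝ} (hper : ∀ t, y N t = y 1 t)
    (hy : ∀ j ∈ Finset.Icc 1 (N - 1), ∀ t ∈ Ici a,
      HasDerivWithinAt (y j) (W (y (j + 1) t) - W (y j t)) (Ici a) t) (k : ℝ) :
    AntitoneOn (fun t => ∑ j ∈ Finset.Icc 1 (N - 1), max (y j t - k) 0) (Ici a) := by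
  set J := Finset.Icc 1 (N - 1)
  refine antitoneOn_of_frequently_slope_lt
    (continuousOn_finsetSum J fun j hj t ht =>
      ((hy j hj t ht).continuousWithinAt.sub continuousWithinAt_const).max
        continuousWithinAt_const) fun x hx r hr => ?_
  set G : ℕ → ℝ := fun j => W (max (y j x) k)
  set ε := r / (J.card + 1)
  have hε_pos : 0 < ε := by positivity
  have hε : J.card * ε < r := by
    rw [← mul_div_assoc, div_lt_iff₀ (by positivity)]
    nlinarith
  have hev : ∀ j ∈ J, ∀ᶠ z in 𝓝[>] x,
      slope (fun t => max (y j t - k) 0) x z < G (j + 1) - G j + ε := by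
    intro j hj
    refine eventually_slope_max_sub_zero_lt
      ((hy j hj x hx).mono (Ioi_subset_Ici_iff.2 hx)) (fun hk => ?_) (fun hk => ?_)
    · have := hW (le_max_left (y (j + 1) x) k)
      simp only [G, max_eq_left hk] at this ⊢
      linarith
    · have := hW (le_max_right (y (j + 1) x) k)
      simp only [G, max_eq_right hk] at this ⊢
      linarith
  refine ((J.eventually_all.2 hev).mono fun z hz => ?_).frequently
  calc slope (fun t => ∑ j ∈ J, max (y j t - k) 0) x z
      = ∑ j ∈ J, slope (fun t => max (y j t - k) 0) x z := slope_finsetSum J _ x z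
    _ ≤ ∑ j ∈ J, (G (j + 1) - G j + ε) := Finset.sum_le_sum fun j hj => (hz j hj).le
    _ = J.card * ε := by
      rw [Finset.sum_add_distrib, Finset.sum_Icc_sub_eq_zero_of_eq (by simp only [G, hper]),
        Finset.sum_const, nsmul_eq_mul, zero_add]
    _ < r := hε

theorem ftl_sum_positive_negative_parts_nonincreasing_general
    (N : ℕ) (ℓ : ℝ) (hℓ : 0 < ℓ)
    (V : ℝ → ℝ) (hVmono : Monotone V)
    (y : ℕ → ℝ → ℝ) (hy : IsFtLSolution N ℓ V y) (k : ℝ) :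
    AntitoneOn (fun t => ∑ j ∈ Finset.Icc 1 (N - 1), max (y j t - k) 0)
      (Set.Ici (0 : ℝ)) ∧
    AntitoneOn (fun t => ∑ j ∈ Finset.Icc 1 (N - 1), -min (y j t - k) 0)
      (Set.Ici (0 : ℝ)) := by
  obtain ⟨hper, hderiv⟩ := hy
  set W : ℝ → ℝ := fun u => 1 / ℓ * V u
  have hW : Monotone W := hVmono.const_mul (by positivity)
  refine ⟨antitoneOn_sum_max_sub_zero_of_periodic hW hper
    (fun j hj t ht => by simpa only [W, mul_sub] using hderiv j hj t ht) k, ?_⟩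
  have hW' : Monotone fun u => -W (-u) := fun u v huv => neg_le_neg (hW (neg_le_neg huv))
  have hneg := antitoneOn_sum_max_sub_zero_of_periodic hW' (N := N) (y := fun j t => -y j t)
    (fun t => by simp only [hper]) (fun j hj t ht =>
      (hderiv j hj t ht).neg.congr_deriv (by simp only [W, neg_neg]; ring)) (-k)
  convert hneg using 3 with t j
  rw [← max_neg_neg, neg_zero, neg_sub, neg_sub_neg]

/-- For a solution of the periodic semi-discrete FtL system and any `k ∈ ℝ`,
both `t ↦ Σ_{j=1}^{N−1} (y_j(t) − k)⁺` and `t ↦ Σ_{j=1}^{N−1} (y_j(t) − k)⁻`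
are nonincreasing on `[0, ∞)`. -/
theorem ftl_sum_positive_negative_parts_nonincreasing
    (N : ℕ) (hN : 2 ≤ N) (ℓ : ℝ) (hℓ : 0 < ℓ)
    (V : ℝ → ℝ) (LV : NNReal) (hVlip : LipschitzWith LV V) (hVmono : Monotone V)
    (y : ℕ → ℝ → ℝ) (hy : IsFtLSolution N ℓ V y) (k : ℝ) :
    AntitoneOn (fun t => ∑ j ∈ Finset.Icc 1 (N - 1), max (y j t - k) 0)
      (Set.Ici (0 : ℝ)) ∧
    AntitoneOn (fun t => ∑ j ∈ Finset.Icc 1 (N - 1), -min (y j t - k) 0)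
      (Set.Ici (0 : ℝ)) :=
  ftl_sum_positive_negative_parts_nonincreasing_general N ℓ hℓ V hVmono y hy k
end

section
/- Let y_1, …, y_{N−1} solve the periodic semi-discrete FtL system, and let K ≥ 1. If 1 ≤ y_j(0) ≤ K for all j = 1,…,N−1, then 1 ≤ y_j(t) ≤ K for all j = 1,…,N−1 and all t ≥ 0. -/
/-!
The maximum `max_j y_j(t)` is nonincreasing: at an index `j` attaining it, `y_{j+1} ≤ y_j`
(periodicity keeps `y_N = y_1` among the competitors), so `ẏ_j ≤ 0` because `V` is
nondecreasing, and a right-derivative comparison argument applies to the upper envelope.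
The minimum is handled by the same argument after the reflection `y ↦ -y`, `V ↦ -V(-·)`,
which preserves the system and the monotonicity of `V`.
-/

open Set Filter Topology

section UpperEnvelope

variable {ι : Type*} {s : Finset ι} (hs : s.Nonempty)

theorem exists_frequently_sup'_apply_eq {α β : Type*} [LinearOrder β] {g : ι → α → β}
    {l : Filter α} [l.NeBot] : ∃ i ∈ s, ∃ᶠ z in l, s.sup' hs (g · z) = g i z := by
  by_contra! h
  obtain ⟨z, hz⟩ := ((eventually_all_finset s).2 h).exists
  obtain ⟨i, hi, hieq⟩ := s.exists_mem_eq_sup' hs (g · z)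
  exact hz i hi hieq

theorem sup'_apply_le_of_hasDerivWithinAt_nonpos_of_isMax {g d : ι → ℝ → ℝ} {a b : ℝ}
    (hg : ∀ i ∈ s, ContinuousOn (g i) (Icc a b))
    (hderiv : ∀ i ∈ s, ∀ x ∈ Ico a b, HasDerivWithinAt (g i) (d i x) (Ici x) x)
    (hmax : ∀ x ∈ Ico a b, ∀ i ∈ s, (∀ k ∈ s, g k x ≤ g i x) → d i x ≤ 0) :
    ∀ x ∈ Icc a b, s.sup' hs (g · x) ≤ s.sup' hs (g · a) := by
  set F : ℝ → ℝ := fun x => s.sup' hs (g · x)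
  refine image_le_of_liminf_slope_right_le_deriv_boundary (B := fun _ => F a) (B' := 0)
    (ContinuousOn.finset_sup'_apply hs hg) le_rfl continuousOn_const
    (fun x _ => hasDerivWithinAt_const x _ _) ?_
  intro x hx r hr
  obtain ⟨i, hi, hFi⟩ := exists_frequently_sup'_apply_eq hs (g := g) (l := 𝓝[>] x)
  have hright : ∀ k ∈ s, Tendsto (g k) (𝓝[>] x) (𝓝 (g k x)) := fun k hk =>
    ((hderiv k hk x hx).continuousWithinAt.tendsto).mono_left
      (nhdsWithin_mono x Ioi_subset_Ici_self)
  have hFx : F x = g i x :=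
    tendsto_nhds_unique_of_frequently_eq (Tendsto.finset_sup'_nhds_apply hs hright)
      (hright i hi) hFi
  have hdi : d i x ≤ 0 := hmax x hx i hi fun k hk => hFx ▸ s.le_sup' (g · x) hk
  have hslope : ∀ᶠ z in 𝓝[>] x, slope (g i) x z < r :=
    (hderiv i hi x hx).Ioi_of_Ici.limsup_slope_le' (lt_irrefl x) (hdi.trans_lt hr)
  refine (hFi.and_eventually hslope).mono fun z ⟨hz, hzr⟩ => ?_
  simpa only [slope_def_field, F, hz, hFx] using hzr

end UpperEnvelope

namespace IsFtLSolution

variable {N : ℕ} {ℓ : ℝ} {V : ℝ → ℝ} {y : ℕ → ℝ → ℝ}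

theorem exists_eq_succ (hy : IsFtLSolution N ℓ V y) {j : ℕ} (hj : j ∈ Finset.Icc 1 (N - 1))
    (t : ℝ) : ∃ i ∈ Finset.Icc 1 (N - 1), y (j + 1) t = y i t := by
  rw [Finset.mem_Icc] at hj
  by_cases hjN : j + 1 ≤ N - 1
  · exact ⟨j + 1, Finset.mem_Icc.2 ⟨by omega, hjN⟩, rfl⟩
  · refine ⟨1, Finset.mem_Icc.2 ⟨le_rfl, by omega⟩, ?_⟩
    rw [show j + 1 = N by omega, hy.1]

theorem neg (hy : IsFtLSolution N ℓ V y) :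
    IsFtLSolution N ℓ (fun u => -V (-u)) (fun j t => -y j t) :=
  ⟨fun t => congrArg Neg.neg (hy.1 t), fun j hj t ht =>
    (hy.2 j hj t ht).neg.congr_deriv (by simp only [neg_neg]; ring)⟩

theorem le_of_forall_initial_le (hℓ : 0 < ℓ) (hV : Monotone V) (hy : IsFtLSolution N ℓ V y)
    {K : ℝ} (h0 : ∀ j ∈ Finset.Icc 1 (N - 1), y j 0 ≤ K) :
    ∀ j ∈ Finset.Icc 1 (N - 1), ∀ t : ℝ, 0 ≤ t → y j t ≤ K := by
  intro j hj t ht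
  have hs : (Finset.Icc 1 (N - 1)).Nonempty := ⟨j, hj⟩
  have hmax : ∀ x ∈ Ico 0 t, ∀ i ∈ Finset.Icc 1 (N - 1),
      (∀ k ∈ Finset.Icc 1 (N - 1), y k x ≤ y i x) →
        1 / ℓ * (V (y (i + 1) x) - V (y i x)) ≤ 0 := by
    intro x _ i hi hi_max
    obtain ⟨k, hk, hsucc⟩ := hy.exists_eq_succ hi x
    have : V (y (i + 1) x) ≤ V (y i x) := hV (hsucc ▸ hi_max k hk)
    exact mul_nonpos_of_nonneg_of_nonpos (by positivity) (by linarith)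
  calc y j t ≤ (Finset.Icc 1 (N - 1)).sup' hs (y · t) := Finset.le_sup' (y · t) hj
    _ ≤ (Finset.Icc 1 (N - 1)).sup' hs (y · 0) :=
      sup'_apply_le_of_hasDerivWithinAt_nonpos_of_isMax hs
        (fun i hi x hx => (hy.2 i hi x hx.1).continuousWithinAt.mono Icc_subset_Ici_self)
        (fun i hi x hx => (hy.2 i hi x hx.1).mono (Ici_subset_Ici.2 hx.1)) hmax t ⟨ht, le_rfl⟩
    _ ≤ K := Finset.sup'_le hs _ h0

end IsFtLSolution

theorem ftl_invariant_region_general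
    (N : ℕ) (ℓ : ℝ) (hℓ : 0 < ℓ)
    (V : ℝ → ℝ) (hVmono : Monotone V)
    (y : ℕ → ℝ → ℝ) (hy : IsFtLSolution N ℓ V y)
    (K : ℝ)
    (h0 : ∀ j ∈ Finset.Icc 1 (N - 1), 1 ≤ y j 0 ∧ y j 0 ≤ K) :
    ∀ j ∈ Finset.Icc 1 (N - 1), ∀ t : ℝ, 0 ≤ t → 1 ≤ y j t ∧ y j t ≤ K := by
  have hVneg : Monotone fun u => -V (-u) := fun a b hab => neg_le_neg (hVmono (neg_le_neg hab))
  have lower := hy.neg.le_of_forall_initial_le hℓ hVneg (K := -1)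
    fun j hj => neg_le_neg (h0 j hj).1
  have upper := hy.le_of_forall_initial_le hℓ hVmono fun j hj => (h0 j hj).2
  exact fun j hj t ht => ⟨neg_le_neg_iff.1 (lower j hj t ht), upper j hj t ht⟩

/-- If `1 ≤ y_j(0) ≤ K` for all `j = 1,…,N−1`, then `1 ≤ y_j(t) ≤ K` for all
`j` and all `t ≥ 0`, for a solution of the periodic semi-discrete FtL system. -/
theorem ftl_invariant_region
    (N : ℕ) (hN : 2 ≤ N) (ℓ : ℝ) (hℓ : 0 < ℓ)
    (V : ℝ → ℝ) (LV : NNReal) (hVlip : LipschitzWith LV V) (hVmono : Monotone V)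
    (y : ℕ → ℝ → ℝ) (hy : IsFtLSolution N ℓ V y)
    (K : ℝ) (hK : 1 ≤ K)
    (h0 : ∀ j ∈ Finset.Icc 1 (N - 1), 1 ≤ y j 0 ∧ y j 0 ≤ K) :
    ∀ j ∈ Finset.Icc 1 (N - 1), ∀ t : ℝ, 0 ≤ t → 1 ≤ y j t ∧ y j t ≤ K :=
  ftl_invariant_region_general N ℓ hℓ V hVmono y hy K h0
end

section
/- Let y_1, …, y_{N−1} and ỹ_1, …, ỹ_{N−1} be two solutions of the periodic semi-discrete FtL system (with the same V, N, ℓ). Then for every T ≥ 0, Σ_{j=1}^{N−1} |y_j(T) − ỹ_j(T)| ≤ Σ_{j=1}^{N−1} |y_j(0) − ỹ_j(0)|. -/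
open Filter Topology Set

/-- If `e` has right-derivative `d` at `t ≥ 0` (within `Ici 0`), then the right slope of
`|e|` at `t` tends to `L`, where `L = |d|` if `e t = 0`, `L = d` if `e t > 0`,
`L = -d` if `e t < 0`. -/
lemma abs_slope_tendsto {e : ℝ → ℝ} {t d L : ℝ} (ht : (0:ℝ) ≤ t)
    (hd : HasDerivWithinAt e d (Set.Ici (0:ℝ)) t)
    (hL : (e t = 0 ∧ L = |d|) ∨ (0 < e t ∧ L = d) ∨ (e t < 0 ∧ L = -d)) :
    Tendsto (fun z => (z - t)⁻¹ * (|e z| - |e t|)) (𝓝[>] t) (𝓝 L) := by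
  have hsub : Set.Ioi t ⊆ Set.Ici (0:ℝ) \ {t} := fun z hz =>
    ⟨le_trans ht (le_of_lt hz), by simpa using ne_of_gt hz⟩
  have hslope : Tendsto (fun z => (z - t)⁻¹ * (e z - e t)) (𝓝[>] t) (𝓝 d) := by
    have := (hasDerivWithinAt_iff_tendsto_slope.mp hd).mono_left (nhdsWithin_mono t hsub)
    refine this.congr fun z => ?_
    simp [slope_def_field, div_eq_inv_mul]
  have hcont : Tendsto e (𝓝[>] t) (𝓝 (e t)) :=
    (hd.continuousWithinAt).tendsto.mono_left
      (nhdsWithin_mono t (fun z hz => le_trans ht (le_of_lt hz)))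
  rcases hL with ⟨h0, hL⟩ | ⟨hpos, hL⟩ | ⟨hneg, hL⟩
  · subst hL
    have habs : Tendsto (fun z => |(z - t)⁻¹ * (e z - e t)|) (𝓝[>] t) (𝓝 |d|) :=
      hslope.abs
    refine habs.congr' ?_
    filter_upwards [self_mem_nhdsWithin] with z hz
    have hzt : (0:ℝ) < z - t := sub_pos.mpr hz
    rw [abs_mul, abs_of_pos (inv_pos.mpr hzt), h0, abs_zero, sub_zero, sub_zero]
  · subst hL
    refine hslope.congr' ?_
    filter_upwards [hcont.eventually (eventually_gt_nhds hpos)] with z hz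
    rw [abs_of_pos hz, abs_of_pos hpos]
  · subst hL
    have : Tendsto (fun z => (z - t)⁻¹ * (-(e z) - -(e t))) (𝓝[>] t) (𝓝 (-d)) := by
      have := hslope.neg
      refine this.congr fun z => ?_
      ring
    refine this.congr' ?_
    filter_upwards [hcont.eventually (eventually_lt_nhds hneg)] with z hz
    rw [abs_of_neg hz, abs_of_neg hneg]

/-- `L¹` contractivity of the periodic semi-discrete FtL system: two solutions
satisfy `Σ_j |y_j(T) − yt_j(T)| ≤ Σ_j |y_j(0) − yt_j(0)|` for every `T ≥ 0`. -/
theorem ftl_l1_contraction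
    (N : ℕ) (hN : 2 ≤ N) (ℓ : ℝ) (hℓ : 0 < ℓ)
    (V : ℝ → ℝ) (LV : NNReal) (hVlip : LipschitzWith LV V) (hVmono : Monotone V)
    (y yt : ℕ → ℝ → ℝ) (hy : IsFtLSolution N ℓ V y) (hyt : IsFtLSolution N ℓ V yt)
    (T : ℝ) (hT : 0 ≤ T) :
    ∑ j ∈ Finset.Icc 1 (N - 1), |y j T - yt j T| ≤
      ∑ j ∈ Finset.Icc 1 (N - 1), |y j 0 - yt j 0| := by
  classical
  set J := Finset.Icc 1 (N - 1) with hJ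
  set e : ℕ → ℝ → ℝ := fun j s => y j s - yt j s with he
  set W : ℝ → ℝ := fun s => ∑ j ∈ J, |e j s| with hW
  -- derivative of the difference
  have hde : ∀ j ∈ J, ∀ t ∈ Set.Ici (0:ℝ),
      HasDerivWithinAt (e j)
        (1 / ℓ * ((V (y (j+1) t) - V (yt (j+1) t)) - (V (y j t) - V (yt j t))))
        (Set.Ici (0:ℝ)) t := by
    intro j hj t ht
    have h1 := hy.2 j hj t ht
    have h2 := hyt.2 j hj t ht
    have := h1.sub h2
    convert this using 1
    · rfl
    · rfl
    · rfl
    · ring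
  -- continuity of W on Icc 0 T
  have hcontW : ContinuousOn W (Set.Icc 0 T) := by
    apply ContinuousOn.mono (s := Set.Ici (0:ℝ))
    · refine continuousOn_finset_sum J fun j hj => ?_
      have : ContinuousOn (e j) (Set.Ici (0:ℝ)) :=
        fun t ht => (hde j hj t ht).continuousWithinAt
      exact this.abs
    · exact Set.Icc_subset_Ici_self
  -- telescoping sum vanishes
  have hteles : ∀ x : ℝ,
      ∑ j ∈ J, (1 / ℓ * (|V (y (j+1) x) - V (yt (j+1) x)| - |V (y j x) - V (yt j x)|)) = 0 := by
    intro x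
    set g : ℕ → ℝ := fun k => |V (y k x) - V (yt k x)| with hg
    rw [← Finset.mul_sum]
    have hIcc : J = Finset.Ico 1 N := by
      rw [hJ, ← Finset.Ico_add_one_right_eq_Icc,
        Nat.sub_add_cancel (le_trans one_le_two hN)]
    have hsum : ∑ j ∈ J, (g (j+1) - g j) = g N - g 1 := by
      rw [hIcc, Finset.sum_Ico_eq_sum_range]
      have hrw : ∀ i, g (1 + i + 1) - g (1 + i)
          = (fun i => g (1 + i)) (i + 1) - (fun i => g (1 + i)) i := by
        intro i; simp [add_comm, add_assoc, add_left_comm]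
      calc ∑ i ∈ Finset.range (N - 1), (g (1 + i + 1) - g (1 + i))
          = ∑ i ∈ Finset.range (N - 1), ((fun i => g (1 + i)) (i + 1) - (fun i => g (1 + i)) i) :=
            Finset.sum_congr rfl fun i _ => hrw i
        _ = g (1 + (N - 1)) - g (1 + 0) := Finset.sum_range_sub (fun i => g (1 + i)) (N - 1)
        _ = g N - g 1 := by
            rw [add_comm 1 (N-1), Nat.sub_add_cancel (le_trans one_le_two hN), add_zero]
    rw [hsum]
    have hgN : g N = g 1 := by rw [hg]; simp only [hy.1 x, hyt.1 x]
    rw [hgN, sub_self, mul_zero]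
  -- main Grönwall application
  have key := le_gronwallBound_of_liminf_deriv_right_le (f := W) (f' := fun _ => 0)
    (δ := W 0) (K := 0) (ε := 0) (a := 0) (b := T) hcontW ?_ le_rfl ?_
  · have h2 : W T ≤ W 0 := by
      simpa [gronwallBound_K0] using key T (Set.mem_Icc.mpr ⟨hT, le_rfl⟩)
    exact h2
  · -- liminf slope condition
    intro x hx r hr
    have hx0 : (0:ℝ) ≤ x := hx.1
    have hℓ' : (0:ℝ) ≤ 1 / ℓ := le_of_lt (by positivity)
    -- for each j, get the limit of the slope of |e j|
    have hEx : ∀ j ∈ J, ∃ L : ℝ,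
        Tendsto (fun z => (z - x)⁻¹ * (|e j z| - |e j x|)) (𝓝[>] x) (𝓝 L) ∧
        L ≤ 1 / ℓ * (|V (y (j+1) x) - V (yt (j+1) x)| - |V (y j x) - V (yt j x)|) := by
      intro j hj
      set d := 1 / ℓ * ((V (y (j+1) x) - V (yt (j+1) x)) - (V (y j x) - V (yt j x))) with hd
      have hder := hde j hj x hx0
      rcases lt_trichotomy (e j x) 0 with hneg | hzero | hpos
      · refine ⟨-d, abs_slope_tendsto hx0 hder (Or.inr (Or.inr ⟨hneg, rfl⟩)), ?_⟩
        have h1 : V (y j x) - V (yt j x) ≤ 0 :=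
          sub_nonpos.mpr (hVmono (le_of_lt (sub_neg.mp hneg)))
        rw [hd, neg_mul_eq_mul_neg]
        apply mul_le_mul_of_nonneg_left _ hℓ'
        have h2 := abs_of_nonpos h1
        have h3 := neg_abs_le (V (y (j+1) x) - V (yt (j+1) x))
        linarith
      · refine ⟨|d|, abs_slope_tendsto hx0 hder (Or.inl ⟨hzero, rfl⟩), ?_⟩
        have heq : y j x = yt j x := sub_eq_zero.mp hzero
        have hVeq : V (y j x) - V (yt j x) = 0 := by rw [heq, sub_self]
        rw [hd, hVeq, sub_zero, abs_mul, abs_of_nonneg hℓ', abs_zero, sub_zero]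
      · refine ⟨d, abs_slope_tendsto hx0 hder (Or.inr (Or.inl ⟨hpos, rfl⟩)), ?_⟩
        have h1 : 0 ≤ V (y j x) - V (yt j x) :=
          sub_nonneg.mpr (hVmono (le_of_lt (sub_pos.mp hpos)))
        rw [hd]
        apply mul_le_mul_of_nonneg_left _ hℓ'
        have h2 := abs_of_nonneg h1
        have h3 := le_abs_self (V (y (j+1) x) - V (yt (j+1) x))
        linarith
    choose! L hLt hLle using hEx
    have hsumT : Tendsto (fun z => (z - x)⁻¹ * (W z - W x)) (𝓝[>] x) (𝓝 (∑ j ∈ J, L j)) := by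
      have h1 : Tendsto (fun z => ∑ j ∈ J, (z - x)⁻¹ * (|e j z| - |e j x|)) (𝓝[>] x)
          (𝓝 (∑ j ∈ J, L j)) := tendsto_finset_sum J fun j hj => hLt j hj
      refine h1.congr fun z => ?_
      rw [hW]
      rw [← Finset.mul_sum, Finset.sum_sub_distrib]
    have hsumle : (∑ j ∈ J, L j) ≤ 0 := by
      calc (∑ j ∈ J, L j)
          ≤ ∑ j ∈ J, (1 / ℓ * (|V (y (j+1) x) - V (yt (j+1) x)| - |V (y j x) - V (yt j x)|)) :=
            Finset.sum_le_sum hLle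
        _ = 0 := hteles x
    have hlt : (∑ j ∈ J, L j) < r := lt_of_le_of_lt hsumle hr
    have hev : ∀ᶠ z in 𝓝[>] x, (z - x)⁻¹ * (W z - W x) < r :=
      hsumT.eventually (eventually_lt_nhds hlt)
    exact hev.frequently
  · intro x _; simp
end

section
/- Let y_1, …, y_{N−1} solve the periodic semi-discrete FtL system. Then the total variation is nonincreasing in time: for every t ≥ 0, Σ_{j=1}^{N−1} |y_{j+1}(t) − y_j(t)| ≤ Σ_{j=1}^{N−1} |y_{j+1}(0) − y_j(0)|, where indices are taken cyclically (y_N := y_1). -/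
/-! Write `d_j = y_{j+1} - y_j` and `u_j` for the velocity of `y_j`. Since `V` is monotone,
`u_j = (V y_{j+1} - V y_j) / ℓ` has the sign of `d_j` and vanishes where `d_j` does, so the
right derivative of `|d_j|`, namely `sign d_j * (u_{j+1} - u_j)` (or `|u_{j+1} - u_j|` where
`d_j = 0`), is at most `|u_{j+1}| - |u_j|`. These bounds telescope to `|u_N| - |u_1| = 0` by
periodicity, so the total variation has nonpositive right derivative and cannot increase. -/

open Set Asymptotics

noncomputable def rightDerivAbs (v v' : ℝ) : ℝ := if v = 0 then |v'| else SignType.sign v * v'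

theorem HasDerivWithinAt.abs_Ici {f : ℝ → ℝ} {f' x : ℝ} (hf : HasDerivWithinAt f f' (Ici x) x) :
    HasDerivWithinAt (fun s => |f s|) (rightDerivAbs (f x) f') (Ici x) x := by
  by_cases hfx : f x = 0
  · rw [rightDerivAbs, if_pos hfx, hasDerivWithinAt_iff_isLittleO]
    refine IsBigO.trans_isLittleO ?_ (hasDerivWithinAt_iff_isLittleO.1 hf)
    refine IsBigO.of_bound 1 ?_
    filter_upwards [self_mem_nhdsWithin] with s (hs : x ≤ s)
    have hlin : (s - x) * |f'| = |(s - x) * f'| := by rw [abs_mul, abs_of_nonneg (sub_nonneg.2 hs)]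
    rw [hfx, abs_zero, sub_zero, sub_zero, smul_eq_mul, smul_eq_mul, one_mul, Real.norm_eq_abs,
      Real.norm_eq_abs, hlin]
    exact abs_abs_sub_abs_le_abs_sub (f s) ((s - x) * f')
  · rw [rightDerivAbs, if_neg hfx]
    exact (hasDerivAt_abs hfx).comp_hasDerivWithinAt x hf

theorem rightDerivAbs_sub_le {d a b : ℝ} (had : 0 ≤ a * d) (ha : d = 0 → a = 0) :
    rightDerivAbs d (b - a) ≤ |b| - |a| := by
  rcases lt_trichotomy d 0 with hd | rfl | hd
  · rw [rightDerivAbs, if_neg hd.ne, sign_neg hd, abs_of_nonpos (nonpos_of_mul_nonneg_left had hd),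
      SignType.coe_neg, SignType.coe_one]
    linarith [neg_abs_le b]
  · rw [rightDerivAbs, if_pos rfl, ha rfl, sub_zero, abs_zero, sub_zero]
  · rw [rightDerivAbs, if_neg hd.ne', sign_pos hd, abs_of_nonneg (nonneg_of_mul_nonneg_left had hd),
      SignType.coe_one]
    linarith [le_abs_self b]

theorem antitoneOn_Ici_of_hasDerivWithinAt_Ici_nonpos {f f' : ℝ → ℝ} {a : ℝ}
    (hf : ContinuousOn f (Ici a)) (hf' : ∀ x ∈ Ici a, HasDerivWithinAt f (f' x) (Ici x) x)
    (hf'_nonpos : ∀ x ∈ Ici a, f' x ≤ 0) : AntitoneOn f (Ici a) := by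
  intro p hp q hq hpq
  have hsub : Icc p q ⊆ Ici a := Icc_subset_Ici_self.trans (Ici_subset_Ici.2 hp)
  have hsub' : Ico p q ⊆ Ici a := Ico_subset_Icc_self.trans hsub
  exact image_le_of_deriv_right_le_deriv_boundary (hf.mono hsub)
    (fun x hx => hf' x (hsub' hx)) (B := fun _ => f p) le_rfl continuousOn_const
    (fun x _ => hasDerivWithinAt_const x _ (f p)) (fun x hx => hf'_nonpos x (hsub' hx))
    ⟨hpq, le_rfl⟩

theorem antitoneOn_sum_abs_sub_of_velocity_sign {n : ℕ} (hn : 1 ≤ n) {a : ℝ} {y u : ℕ → ℝ → ℝ}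
    (hy : ∀ k ∈ Finset.Icc 1 (n + 1), ∀ x ∈ Ici a, HasDerivWithinAt (y k) (u k x) (Ici a) x)
    (hsign : ∀ k ∈ Finset.Icc 1 n, ∀ x ∈ Ici a, 0 ≤ u k x * (y (k + 1) x - y k x))
    (hzero : ∀ k ∈ Finset.Icc 1 n, ∀ x ∈ Ici a, y (k + 1) x = y k x → u k x = 0)
    (hends : ∀ x ∈ Ici a, |u (n + 1) x| ≤ |u 1 x|) :
    AntitoneOn (fun t => ∑ k ∈ Finset.Icc 1 n, |y (k + 1) t - y k t|) (Ici a) := by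
  have hmem : ∀ k ∈ Finset.Icc 1 n, k ∈ Finset.Icc 1 (n + 1) ∧ k + 1 ∈ Finset.Icc 1 (n + 1) := by
    intro k hk
    simp only [Finset.mem_Icc] at hk ⊢
    omega
  have hgap : ∀ k ∈ Finset.Icc 1 n, ∀ x ∈ Ici a,
      HasDerivWithinAt (fun t => y (k + 1) t - y k t) (u (k + 1) x - u k x) (Ici a) x :=
    fun k hk x hx => (hy (k + 1) (hmem k hk).2 x hx).sub (hy k (hmem k hk).1 x hx)
  refine antitoneOn_Ici_of_hasDerivWithinAt_Ici_nonpos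
    (f' := fun x => ∑ k ∈ Finset.Icc 1 n, rightDerivAbs (y (k + 1) x - y k x) (u (k + 1) x - u k x))
    ?_ ?_ ?_
  · refine continuousOn_finsetSum _ fun k hk x hx => ?_
    exact (hgap k hk x hx).continuousWithinAt.abs
  · intro x hx
    refine HasDerivWithinAt.fun_sum fun k hk => ?_
    exact ((hgap k hk x hx).mono (Ici_subset_Ici.2 hx)).abs_Ici
  · intro x hx
    calc ∑ k ∈ Finset.Icc 1 n, rightDerivAbs (y (k + 1) x - y k x) (u (k + 1) x - u k x)
        ≤ ∑ k ∈ Finset.Icc 1 n, (|u (k + 1) x| - |u k x|) :=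
          Finset.sum_le_sum fun k hk =>
            rightDerivAbs_sub_le (hsign k hk x hx) fun h => hzero k hk x hx (sub_eq_zero.1 h)
      _ = |u (n + 1) x| - |u 1 x| := Finset.sum_Icc_sub hn (fun k => |u k x|)
      _ ≤ 0 := sub_nonpos.2 (hends x hx)

theorem ftl_total_variation_nonincreasing_general
    (N : ℕ) (hN : 2 ≤ N) (ℓ : ℝ) (hℓ : 0 < ℓ)
    (V : ℝ → ℝ) (hVmono : Monotone V)
    (y : ℕ → ℝ → ℝ) (hy : IsFtLSolution N ℓ V y)
    (t : ℝ) (ht : 0 ≤ t) :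
    ∑ j ∈ Finset.Icc 1 (N - 1), |y (j + 1) t - y j t| ≤
      ∑ j ∈ Finset.Icc 1 (N - 1), |y (j + 1) 0 - y j 0| := by
  obtain ⟨hper, hode⟩ := hy
  have hN1 : N - 1 + 1 = N := by omega
  set w : ℕ → ℝ → ℝ := fun k s => 1 / ℓ * (V (y (k + 1) s) - V (y k s))
  -- the periodic particle `y N = y 1` moves with the velocity of `y 1`
  set u : ℕ → ℝ → ℝ := fun k => if k = N then w 1 else w k
  have hu : ∀ k ∈ Finset.Icc 1 (N - 1), u k = w k := fun k hk => by
    simp only [Finset.mem_Icc] at hk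
    simp only [u, if_neg (show k ≠ N by omega)]
  refine antitoneOn_sum_abs_sub_of_velocity_sign (by omega) (u := u) ?_ ?_ ?_ ?_ self_mem_Ici ht ht
  · intro k hk x hx
    by_cases hkN : k = N
    · subst hkN
      simp only [u, if_pos rfl, funext hper]
      exact hode 1 (by simp only [Finset.mem_Icc]; omega) x hx
    · simp only [u, if_neg hkN]
      exact hode k (by simp only [Finset.mem_Icc] at hk ⊢; omega) x hx
  · intro k hk x _
    rw [hu k hk, mul_assoc]
    exact mul_nonneg (by positivity)
      ((hVmono.monovary monotone_id).sub_mul_sub_nonneg (y k x) (y (k + 1) x))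
  · intro k hk x _ h
    simp only [hu k hk, w, h, sub_self, mul_zero]
  · intro x _
    simp only [hN1, u, if_pos rfl, if_neg (show 1 ≠ N by omega), le_refl]

/-- The (cyclic) total variation of a solution of the periodic semi-discrete
FtL system is nonincreasing in time (indices cyclic, `y_N := y_1`). -/
theorem ftl_total_variation_nonincreasing
    (N : ℕ) (hN : 2 ≤ N) (ℓ : ℝ) (hℓ : 0 < ℓ)
    (V : ℝ → ℝ) (LV : NNReal) (hVlip : LipschitzWith LV V) (hVmono : Monotone V)
    (y : ℕ → ℝ → ℝ) (hy : IsFtLSolution N ℓ V y)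
    (t : ℝ) (ht : 0 ≤ t) :
    ∑ j ∈ Finset.Icc 1 (N - 1), |y (j + 1) t - y j t| ≤
      ∑ j ∈ Finset.Icc 1 (N - 1), |y (j + 1) 0 - y j 0| :=
  ftl_total_variation_nonincreasing_general N hN ℓ hℓ V hVmono y hy t ht
end

section
/- Let y_1, …, y_{N−1} solve the periodic semi-discrete FtL system. Then for all 0 ≤ s ≤ t, ℓ Σ_{j=1}^{N−1} |y_j(t) − y_j(s)| ≤ L_V (t − s) Σ_{j=1}^{N−1} |y_{j+1}(0) − y_j(0)| (indices cyclic, y_N := y_1); i.e., the piecewise-constant profile is Lipschitz continuous in time in the ℓ-weighted ℓ¹ norm, with Lipschitz constant L_V times the initial total variation. -/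
open Set Filter Finset

/-- Time-Lipschitz continuity in the `ℓ`-weighted `ℓ¹` norm: for `0 ≤ s ≤ t`,
`ℓ Σ_j |y_j(t) − y_j(s)| ≤ L_V (t − s) Σ_j |y_{j+1}(0) − y_j(0)|`
(indices cyclic, `y_N := y_1`). -/
theorem ftl_time_lipschitz_l1
    (N : ℕ) (hN : 2 ≤ N) (ℓ : ℝ) (hℓ : 0 < ℓ)
    (V : ℝ → ℝ) (LV : NNReal) (hVlip : LipschitzWith LV V) (hVmono : Monotone V)
    (y : ℕ → ℝ → ℝ) (hy : IsFtLSolution N ℓ V y)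
    (s t : ℝ) (hs : 0 ≤ s) (hst : s ≤ t) :
    ℓ * ∑ j ∈ Finset.Icc 1 (N - 1), |y j t - y j s| ≤
      (LV : ℝ) * (t - s) * ∑ j ∈ Finset.Icc 1 (N - 1), |y (j + 1) 0 - y j 0| := by
  classical
  set I : Finset ℕ := Finset.Icc 1 (N - 1) with hI
  have hN1 : 1 ≤ N - 1 := by omega
  have hN1' : N - 1 + 1 = N := by omega
  have h1I : (1 : ℕ) ∈ I := by simp [hI]; omega
  -- basic objects
  set σ : ℕ → ℕ := fun j => if j = N - 1 then 1 else j + 1 with hσ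
  set g : ℕ → ℝ → ℝ := fun j τ => y (j + 1) τ - y j τ with hg
  set d : ℕ → ℝ → ℝ := fun j τ => 1 / ℓ * (V (y (j + 1) τ) - V (y j τ)) with hd
  set F : Finset ℕ → ℝ → ℝ := fun S τ => ∑ j ∈ S, g j τ with hF
  set D : Finset ℕ → ℝ → ℝ := fun S τ => ∑ j ∈ S, (d (σ j) τ - d j τ) with hD
  have hσI : ∀ j ∈ I, σ j ∈ I := by
    intro j hj
    simp only [hI, Finset.mem_Icc] at hj ⊢
    simp only [hσ]
    split <;> omega
  have hσinj : Set.InjOn σ I := by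
    intro a ha b hb hab
    simp only [hI, Finset.coe_Icc, Set.mem_Icc] at ha hb
    simp only [hσ] at hab
    split at hab <;> split at hab <;> omega
  have hderiv : ∀ j ∈ I, ∀ τ ∈ Set.Ici (0:ℝ), HasDerivWithinAt (y j) (d j τ) (Set.Ici 0) τ :=
    hy.2
  have hderiv' : ∀ j ∈ I, ∀ τ ∈ Set.Ici (0:ℝ),
      HasDerivWithinAt (y (j + 1)) (d (σ j) τ) (Set.Ici 0) τ := by
    intro j hj τ hτ
    simp only [hI, Finset.mem_Icc] at hj
    by_cases hjN : j = N - 1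
    · have h1 := hderiv 1 h1I τ hτ
      have hσj : σ j = 1 := by simp [hσ, hjN]
      rw [hσj]
      subst hjN
      rw [hN1']
      exact h1.congr (fun x _ => hy.1 x) (hy.1 τ)
    · have hσj : σ j = j + 1 := by simp [hσ, hjN]
      rw [hσj]
      exact hderiv (j + 1) (by simp [hI, Finset.mem_Icc]; omega) τ hτ
  have hgderiv : ∀ j ∈ I, ∀ τ ∈ Set.Ici (0:ℝ),
      HasDerivWithinAt (g j) (d (σ j) τ - d j τ) (Set.Ici 0) τ := by
    intro j hj τ hτ
    exact (hderiv' j hj τ hτ).sub (hderiv j hj τ hτ)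
  have hFderiv : ∀ S ∈ I.powerset, ∀ τ ∈ Set.Ici (0:ℝ),
      HasDerivWithinAt (F S) (D S τ) (Set.Ici 0) τ := by
    intro S hS τ hτ
    rw [Finset.mem_powerset] at hS
    exact HasDerivWithinAt.fun_sum fun j hj => hgderiv j (hS hj) τ hτ
  have hFcont : ∀ S ∈ I.powerset, ContinuousOn (F S) (Set.Ici 0) := by
    intro S hS τ hτ
    exact (hFderiv S hS τ hτ).continuousWithinAt
  -- telescoping: ∑_{j ∈ I} g j τ = 0
  have hsum0 : ∀ τ : ℝ, F I τ = 0 := by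
    intro τ
    have h1 : F I τ = ∑ j ∈ Finset.Ico 1 N, (y (j + 1) τ - y j τ) := by
      simp only [hF, hg, hI]
      rw [← Finset.Ico_add_one_right_eq_Icc, hN1']
    rw [h1, Finset.sum_Ico_eq_sum_range]
    have h2 := Finset.sum_range_sub (fun i => y (i + 1) τ) (N - 1)
    have h3 : ∑ i ∈ Finset.range (N - 1), (y (1 + i + 1) τ - y (1 + i) τ)
        = y (N - 1 + 1) τ - y (0 + 1) τ := by
      rw [← h2]
      apply Finset.sum_congr rfl
      intro i _
      rw [show 1 + i = i + 1 by ring]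
    rw [h3, hN1', hy.1, zero_add]
    ring
  -- sign of d
  have hdsign : ∀ i : ℕ, ∀ x : ℝ, (0 ≤ g i x → 0 ≤ d i x) ∧ (g i x ≤ 0 → d i x ≤ 0) := by
    intro i x
    constructor
    · intro h
      have : y i x ≤ y (i + 1) x := by simpa [hg, sub_nonneg] using h
      have hV := hVmono this
      simp only [hd]
      exact mul_nonneg (by positivity) (by linarith)
    · intro h
      have : y (i + 1) x ≤ y i x := by simpa [hg, sub_nonpos] using h
      have hV := hVmono this
      simp only [hd]
      apply mul_nonpos_of_nonneg_of_nonpos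
      · positivity
      · linarith
  -- derivative of maximizers is nonpositive
  have hDle : ∀ x : ℝ, ∀ S ∈ I.powerset, (∀ T ∈ I.powerset, F T x ≤ F S x) → D S x ≤ 0 := by
    intro x S hS hmax
    rw [Finset.mem_powerset] at hS
    have hpos : ∀ j ∈ S, 0 ≤ g j x := by
      intro j hj
      have h1 : F (S.erase j) x ≤ F S x :=
        hmax _ (Finset.mem_powerset.2 ((Finset.erase_subset _ _).trans hS))
      have h2 : g j x + F (S.erase j) x = F S x :=
        Finset.add_sum_erase S (fun a => g a x) hj
      linarith
    have hneg : ∀ j ∈ I, j ∉ S → g j x ≤ 0 := by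
      intro j hjI hjS
      have h1 : F (insert j S) x ≤ F S x :=
        hmax _ (Finset.mem_powerset.2 (Finset.insert_subset hjI hS))
      have h2 : F (insert j S) x = g j x + F S x :=
        Finset.sum_insert hjS
      linarith
    have himg : ∑ i ∈ S.image σ, d i x = ∑ j ∈ S, d (σ j) x :=
      Finset.sum_image (fun a ha b hb hab =>
        hσinj (Finset.mem_coe.2 (hS ha)) (Finset.mem_coe.2 (hS hb)) hab)
    have hDeq : D S x = ∑ i ∈ S.image σ, d i x - ∑ j ∈ S, d j x := by
      simp only [hD, Finset.sum_sub_distrib, himg]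
    set T := S.image σ with hT
    have hTI : T ⊆ I := by
      intro i hi
      rw [hT, Finset.mem_image] at hi
      obtain ⟨j, hj, rfl⟩ := hi
      exact hσI j (hS hj)
    have e1 : ∑ i ∈ T ∩ S, d i x + ∑ i ∈ T \ S, d i x = ∑ i ∈ T, d i x :=
      Finset.sum_inter_add_sum_sdiff T S _
    have e2 : ∑ i ∈ S ∩ T, d i x + ∑ i ∈ S \ T, d i x = ∑ i ∈ S, d i x :=
      Finset.sum_inter_add_sum_sdiff S T _
    have e3 : ∑ i ∈ T ∩ S, d i x = ∑ i ∈ S ∩ T, d i x := by rw [Finset.inter_comm]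
    have h4 : ∑ i ∈ T \ S, d i x ≤ 0 := by
      apply Finset.sum_nonpos
      intro i hi
      rw [Finset.mem_sdiff] at hi
      exact (hdsign i x).2 (hneg i (hTI hi.1) hi.2)
    have h5 : 0 ≤ ∑ i ∈ S \ T, d i x := by
      apply Finset.sum_nonneg
      intro i hi
      rw [Finset.mem_sdiff] at hi
      exact (hdsign i x).1 (hpos i hi.1)
    rw [hDeq]
    linarith
  -- the maximum over subsets
  have hne : (I.powerset).Nonempty := ⟨∅, by simp⟩
  set M : ℝ → ℝ := fun τ => (I.powerset).sup' hne (fun S => F S τ) with hM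
  have hMcont : ContinuousOn M (Set.Ici 0) :=
    ContinuousOn.finset_sup'_apply hne fun S hS => hFcont S hS
  have hFleM : ∀ τ : ℝ, ∀ S ∈ I.powerset, F S τ ≤ M τ := by
    intro τ S hS
    exact Finset.le_sup' (fun S => F S τ) hS
  -- M is bounded by M 0 on [0, ∞)
  have hMdecr : ∀ τ ∈ Set.Ici (0:ℝ), M τ ≤ M 0 := by
    intro τ hτ
    have key : ∀ ⦃x : ℝ⦄, x ∈ Set.Icc 0 τ → M x ≤ M 0 := by
      apply image_le_of_liminf_slope_right_le_deriv_boundary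
        (B := fun _ => M 0) (B' := fun _ => 0)
      · exact hMcont.mono Set.Icc_subset_Ici_self
      · exact le_refl _
      · exact continuousOn_const
      · intro x _
        exact hasDerivWithinAt_const x _ (M 0)
      · -- bound on the liminf of the slope
        intro x hx r hr
        have hx0 : (0:ℝ) ≤ x := hx.1
        -- pick S with M = F S frequently to the right of x
        have hSex : ∃ S ∈ I.powerset, ∃ᶠ z in nhdsWithin x (Set.Ioi x), M z = F S z := by
          by_contra hcon
          push_neg at hcon
          have hev : ∀ S ∈ I.powerset, ∀ᶠ z in nhdsWithin x (Set.Ioi x), ¬(M z = F S z) := by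
            intro S hS
            have := hcon S hS
            exact this
          have hall : ∀ᶠ z in nhdsWithin x (Set.Ioi x), ∀ S ∈ I.powerset, ¬(M z = F S z) :=
            (Filter.eventually_all_finset _).2 hev
          obtain ⟨z, hz⟩ := hall.exists
          obtain ⟨S, hS, hSz⟩ := Finset.exists_mem_eq_sup' hne (fun S => F S z)
          exact hz S hS hSz
        obtain ⟨S, hS, hfreq⟩ := hSex
        set l := nhdsWithin x (Set.Ioi x) ⊓ Filter.principal {z | M z = F S z} with hl
        have hlne : l.NeBot := Filter.frequently_iff_neBot.1 hfreq
        have hle1 : l ≤ nhdsWithin x (Set.Ioi x) := inf_le_left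
        have hle2 : nhdsWithin x (Set.Ioi x) ≤ nhdsWithin x (Set.Ici 0) :=
          nhdsWithin_mono x (fun z hz => le_trans hx0 (le_of_lt hz))
        have hMx : M x = F S x := by
          have h1 : Filter.Tendsto M l (nhds (M x)) :=
            ((hMcont x hx0).mono_left (hle1.trans hle2))
          have h2 : Filter.Tendsto (F S) l (nhds (F S x)) :=
            ((hFcont S hS x hx0).mono_left (hle1.trans hle2))
          have heq : ∀ᶠ z in l, M z = F S z := by
            rw [hl]
            exact Filter.eventually_inf_principal.2 (Filter.Eventually.of_forall fun z hz => hz)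
          exact tendsto_nhds_unique (h1.congr' heq) h2
        have hmax : ∀ T ∈ I.powerset, F T x ≤ F S x := by
          intro T hT
          rw [← hMx]
          exact hFleM x T hT
        have hDS : D S x ≤ 0 := hDle x S hS hmax
        have hslope : Filter.Tendsto (slope (F S) x) (nhdsWithin x (Set.Ioi x)) (nhds (D S x)) := by
          have h1 := (hasDerivWithinAt_iff_tendsto_slope).1 (hFderiv S hS x hx0)
          apply h1.mono_left
          apply nhdsWithin_mono
          intro z hz
          exact ⟨le_trans hx0 (le_of_lt hz), ne_of_gt hz⟩
        have hev : ∀ᶠ z in nhdsWithin x (Set.Ioi x), slope (F S) x z < r :=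
          hslope.eventually_lt_const (lt_of_le_of_lt hDS hr)
        have hev' : ∀ᶠ z in l, slope M x z < r := by
          filter_upwards [hle1 hev, Filter.eventually_inf_principal.2
            (Filter.Eventually.of_forall fun (z : ℝ) (hz : M z = F S z) => hz)] with z h1 h2
          rw [slope_def_field, h2, hMx]
          rwa [slope_def_field] at h1
        exact (hev'.frequently).filter_mono hle1
    exact key ⟨hτ, le_refl τ⟩
  -- total variation bound: ∑ |g j τ| ≤ ∑ |g j 0| for τ ≥ 0
  have habs : ∀ (a : ℝ), |a| = 2 * max a 0 - a := by
    intro a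
    rcases le_or_gt 0 a with h | h
    · rw [abs_of_nonneg h, max_eq_left h]; ring
    · rw [abs_of_neg h, max_eq_right h.le]; ring
  have hsummax : ∀ τ : ℝ, ∑ j ∈ I, |g j τ| = 2 * ∑ j ∈ I, max (g j τ) 0 := by
    intro τ
    have h0 : ∑ j ∈ I, g j τ = 0 := hsum0 τ
    calc ∑ j ∈ I, |g j τ| = ∑ j ∈ I, (2 * max (g j τ) 0 - g j τ) := by
          exact Finset.sum_congr rfl fun j _ => habs _
      _ = 2 * ∑ j ∈ I, max (g j τ) 0 - ∑ j ∈ I, g j τ := by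
          rw [Finset.sum_sub_distrib, Finset.mul_sum]
      _ = 2 * ∑ j ∈ I, max (g j τ) 0 := by rw [h0, sub_zero]
  have hmaxF : ∀ τ : ℝ, ∑ j ∈ I, max (g j τ) 0 = F (I.filter (fun j => 0 ≤ g j τ)) τ := by
    intro τ
    simp only [hF]
    rw [Finset.sum_filter]
    apply Finset.sum_congr rfl
    intro j _
    split
    · exact max_eq_left ‹_›
    · exact max_eq_right (le_of_not_ge ‹_›)
  have hM0le : M 0 ≤ ∑ j ∈ I, max (g j 0) 0 := by
    obtain ⟨S, hS, hSeq⟩ := Finset.exists_mem_eq_sup' hne (fun S => F S 0)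
    have hM0 : M 0 = F S 0 := hSeq
    rw [hM0]
    rw [Finset.mem_powerset] at hS
    calc F S 0 = ∑ j ∈ S, g j 0 := rfl
      _ ≤ ∑ j ∈ S, max (g j 0) 0 := Finset.sum_le_sum fun j _ => le_max_left _ _
      _ ≤ ∑ j ∈ I, max (g j 0) 0 :=
          Finset.sum_le_sum_of_subset_of_nonneg hS fun j _ _ => le_max_right _ _
  have htv : ∀ τ ∈ Set.Ici (0:ℝ), ∑ j ∈ I, |g j τ| ≤ ∑ j ∈ I, |g j 0| := by
    intro τ hτ
    have h1 : ∑ j ∈ I, |g j τ| = 2 * F (I.filter (fun j => 0 ≤ g j τ)) τ := by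
      rw [hsummax, hmaxF]
    have h2 : F (I.filter (fun j => 0 ≤ g j τ)) τ ≤ M τ :=
      hFleM τ _ (Finset.mem_powerset.2 (Finset.filter_subset _ _))
    have h3 : M τ ≤ M 0 := hMdecr τ hτ
    have h4 : 2 * M 0 ≤ ∑ j ∈ I, |g j 0| := by
      rw [hsummax 0]
      linarith [hM0le]
    linarith
  -- final step: mean value inequality for the signed sum
  set ε : ℕ → ℝ := fun j => if y j s ≤ y j t then 1 else -1 with hε
  set Φ : ℝ → ℝ := fun τ => ∑ j ∈ I, ε j * y j τ with hΦ
  set C : ℝ := (LV : ℝ) / ℓ * ∑ j ∈ I, |g j 0| with hC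
  have hΦderiv : ∀ τ ∈ Set.Ici (0:ℝ),
      HasDerivWithinAt Φ (∑ j ∈ I, ε j * d j τ) (Set.Ici 0) τ := by
    intro τ hτ
    exact HasDerivWithinAt.fun_sum fun j hj => (hderiv j hj τ hτ).const_mul (ε j)
  have hdbound : ∀ j : ℕ, ∀ τ : ℝ, |d j τ| ≤ (LV : ℝ) / ℓ * |g j τ| := by
    intro j τ
    have h1 : |V (y (j + 1) τ) - V (y j τ)| ≤ (LV : ℝ) * |y (j + 1) τ - y j τ| := by
      have := hVlip.dist_le_mul (y (j + 1) τ) (y j τ)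
      rwa [Real.dist_eq, Real.dist_eq] at this
    simp only [hd, hg]
    rw [abs_mul, abs_of_nonneg (by positivity : (0:ℝ) ≤ 1 / ℓ)]
    calc 1 / ℓ * |V (y (j + 1) τ) - V (y j τ)|
        ≤ 1 / ℓ * ((LV : ℝ) * |y (j + 1) τ - y j τ|) :=
          mul_le_mul_of_nonneg_left h1 (by positivity)
      _ = (LV : ℝ) / ℓ * |y (j + 1) τ - y j τ| := by ring
  have hΦbound : ∀ τ ∈ Set.Ici (0:ℝ), ‖∑ j ∈ I, ε j * d j τ‖ ≤ C := by
    intro τ hτ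
    calc ‖∑ j ∈ I, ε j * d j τ‖ ≤ ∑ j ∈ I, ‖ε j * d j τ‖ := norm_sum_le _ _
      _ = ∑ j ∈ I, |d j τ| := by
          apply Finset.sum_congr rfl
          intro j _
          rw [Real.norm_eq_abs, abs_mul]
          have : |ε j| = 1 := by
            simp only [hε]
            split <;> simp
          rw [this, one_mul]
      _ ≤ ∑ j ∈ I, (LV : ℝ) / ℓ * |g j τ| := Finset.sum_le_sum fun j _ => hdbound j τ
      _ = (LV : ℝ) / ℓ * ∑ j ∈ I, |g j τ| := by rw [Finset.mul_sum]
      _ ≤ C := by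
          rw [hC]
          apply mul_le_mul_of_nonneg_left (htv τ hτ) (by positivity)
  have hmvt : ‖Φ t - Φ s‖ ≤ C * ‖t - s‖ :=
    Convex.norm_image_sub_le_of_norm_hasDerivWithin_le
      (f' := fun τ => ∑ j ∈ I, ε j * d j τ)
      (fun τ hτ => hΦderiv τ hτ) (fun τ hτ => hΦbound τ hτ)
      (convex_Ici 0) hs (le_trans hs hst)
  have hΦeq : Φ t - Φ s = ∑ j ∈ I, |y j t - y j s| := by
    simp only [hΦ]
    rw [← Finset.sum_sub_distrib]
    apply Finset.sum_congr rfl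
    intro j _
    rw [← mul_sub]
    simp only [hε]
    rcases le_or_gt (y j s) (y j t) with h | h
    · rw [if_pos h, one_mul, abs_of_nonneg (by linarith : (0:ℝ) ≤ y j t - y j s)]
    · rw [if_neg (not_le.2 h), abs_of_neg (by linarith : y j t - y j s < 0)]
      ring
  have hfinal : ∑ j ∈ I, |y j t - y j s| ≤ C * (t - s) := by
    rw [← hΦeq]
    calc Φ t - Φ s ≤ ‖Φ t - Φ s‖ := le_abs_self _
      _ ≤ C * ‖t - s‖ := hmvt
      _ = C * (t - s) := by rw [Real.norm_eq_abs, abs_of_nonneg (by linarith)]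
  calc ℓ * ∑ j ∈ I, |y j t - y j s| ≤ ℓ * (C * (t - s)) := by
        apply mul_le_mul_of_nonneg_left hfinal (le_of_lt hℓ)
    _ = (LV : ℝ) * (t - s) * ∑ j ∈ I, |g j 0| := by
        rw [hC]; field_simp
    _ = (LV : ℝ) * (t - s) * ∑ j ∈ Finset.Icc 1 (N - 1), |y (j + 1) 0 - y j 0| := rfl
end

section
/- Assume the CFL condition λ L_V ≤ 1, and let K ≥ 1. If 1 ≤ y_i^0 ≤ K for all i = 1,…,N−1, then 1 ≤ y_i^n ≤ K for all i = 1,…,N−1 and all n ≥ 0, where (y_i^n) is generated by the periodic explicit Euler FtL scheme. -/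
/-!
The update `y_i ↦ y_i + λ (V y_{i+1} - V y_i)` is a monotone scheme: it is nondecreasing in
`y_{i+1}` because `V` is, and nondecreasing in `y_i` because the CFL condition makes
`x ↦ x - λ V x` monotone. A monotone map fixing constants maps a box `[a, b]²` into `[a, b]`.
-/

/-- `y n i`, `i = 1, …, N-1`, is generated by the periodic explicit Euler
Follow-the-Leader scheme `y_i^{n+1} = y_i^n + λ(V(y_{i+1}^n) − V(y_i^n))`,
with the periodic convention `y_N^n := y_1^n`. -/
def IsEulerFtL (N : ℕ) (lam : ℝ) (V : ℝ → ℝ) (y : ℕ → ℕ → ℝ) : Prop :=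
  (∀ n : ℕ, y n N = y n 1) ∧
  ∀ n : ℕ, ∀ i ∈ Finset.Icc 1 (N - 1),
    y (n + 1) i = y n i + lam * (V (y n (i + 1)) - V (y n i))

section MonotoneScheme

variable {V : ℝ → ℝ} {L : NNReal} {lam : ℝ}

theorem LipschitzWith.monotone_sub_mul (hV : LipschitzWith L V) (hlam : 0 ≤ lam)
    (hCFL : lam * L ≤ 1) : Monotone fun x => x - lam * V x := by
  intro x y hxy
  have hVxy : V y - V x ≤ L * (y - x) := by
    simpa [Real.dist_eq, abs_of_nonneg (sub_nonneg.mpr hxy)] using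
      (le_abs_self _).trans (hV.dist_le_mul y x)
  have : lam * (V y - V x) ≤ y - x :=
    calc lam * (V y - V x) ≤ lam * (L * (y - x)) := mul_le_mul_of_nonneg_left hVxy hlam
      _ = lam * L * (y - x) := by ring
      _ ≤ 1 * (y - x) := mul_le_mul_of_nonneg_right hCFL (sub_nonneg.mpr hxy)
      _ = y - x := one_mul _
  dsimp only
  linarith

theorem add_mul_sub_mem_Icc (hV : LipschitzWith L V) (hVmono : Monotone V) (hlam : 0 ≤ lam)
    (hCFL : lam * L ≤ 1) {a b x z : ℝ} (hx : x ∈ Set.Icc a b) (hz : z ∈ Set.Icc a b) :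
    x + lam * (V z - V x) ∈ Set.Icc a b := by
  have hself := hV.monotone_sub_mul hlam hCFL
  have hnbr : Monotone fun z => lam * V z := fun _ _ h => mul_le_mul_of_nonneg_left (hVmono h) hlam
  constructor
  · linarith [hself hx.1, hnbr hz.1]
  · linarith [hself hx.2, hnbr hz.2]

end MonotoneScheme

theorem IsEulerFtL.exists_eq_succ {N : ℕ} {lam : ℝ} {V : ℝ → ℝ} {y : ℕ → ℕ → ℝ}
    (hy : IsEulerFtL N lam V y) (n : ℕ) {i : ℕ} (hi : i ∈ Finset.Icc 1 (N - 1)) :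
    ∃ j ∈ Finset.Icc 1 (N - 1), y n (i + 1) = y n j := by
  rw [Finset.mem_Icc] at hi
  rcases hi.2.lt_or_eq with hlt | rfl
  · exact ⟨i + 1, Finset.mem_Icc.mpr ⟨by omega, hlt⟩, rfl⟩
  · refine ⟨1, Finset.mem_Icc.mpr ⟨le_rfl, hi.1⟩, ?_⟩
    rw [show N - 1 + 1 = N by omega, hy.1 n]

theorem eulerFtL_invariant_region_general
    (N : ℕ) (ℓ Δt : ℝ) (hℓ : 0 < ℓ) (hΔt : 0 < Δt)
    (V : ℝ → ℝ) (LV : NNReal) (hVlip : LipschitzWith LV V) (hVmono : Monotone V)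
    (hCFL : Δt / ℓ * (LV : ℝ) ≤ 1)
    (y : ℕ → ℕ → ℝ) (hy : IsEulerFtL N (Δt / ℓ) V y)
    (K : ℝ)
    (h0 : ∀ i ∈ Finset.Icc 1 (N - 1), 1 ≤ y 0 i ∧ y 0 i ≤ K) :
    ∀ n : ℕ, ∀ i ∈ Finset.Icc 1 (N - 1), 1 ≤ y n i ∧ y n i ≤ K := by
  intro n
  induction n with
  | zero => exact h0
  | succ n ih =>
    intro i hi
    obtain ⟨j, hj, hnext⟩ := hy.exists_eq_succ n hi
    rw [hy.2 n i hi]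
    exact add_mul_sub_mem_Icc hVlip hVmono (div_pos hΔt hℓ).le hCFL (ih i hi)
      (hnext ▸ ih j hj)

/-- Under the CFL condition, the bounds `1 ≤ y_i^n ≤ K` are propagated by the
periodic explicit Euler FtL scheme. -/
theorem eulerFtL_invariant_region
    (N : ℕ) (hN : 2 ≤ N) (ℓ Δt : ℝ) (hℓ : 0 < ℓ) (hΔt : 0 < Δt)
    (V : ℝ → ℝ) (LV : NNReal) (hVlip : LipschitzWith LV V) (hVmono : Monotone V)
    (hCFL : Δt / ℓ * (LV : ℝ) ≤ 1)
    (y : ℕ → ℕ → ℝ) (hy : IsEulerFtL N (Δt / ℓ) V y)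
    (K : ℝ) (hK : 1 ≤ K)
    (h0 : ∀ i ∈ Finset.Icc 1 (N - 1), 1 ≤ y 0 i ∧ y 0 i ≤ K) :
    ∀ n : ℕ, ∀ i ∈ Finset.Icc 1 (N - 1), 1 ≤ y n i ∧ y n i ≤ K :=
  eulerFtL_invariant_region_general N ℓ Δt hℓ hΔt V LV hVlip hVmono hCFL y hy K h0
end

section
/- Assume the CFL condition λ L_V ≤ 1. Then the periodic explicit Euler FtL scheme is an ℓ¹ contraction: if (y_i^n) and (ỹ_i^n) are two sequences generated by the scheme, then for every n ≥ 0, Σ_{i=1}^{N−1} |y_i^n − ỹ_i^n| ≤ Σ_{i=1}^{N−1} |y_i^0 − ỹ_i^0|. -/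
open Finset

theorem sum_Icc_sub_eq_zero_of_periodic {M : Type*} [AddCommGroup M] {N : ℕ} {f : ℕ → M}
    (hf : f N = f 1) : ∑ i ∈ Icc 1 (N - 1), (f (i + 1) - f i) = 0 := by
  rcases le_or_gt N 1 with hN | hN
  · rw [Icc_eq_empty (by omega), sum_empty]
  · rw [sum_Icc_sub (by omega), Nat.sub_add_cancel (by omega), hf, sub_self]

theorem abs_sub_sub_mul_sub_le {V : ℝ → ℝ} {LV : NNReal} (hVlip : LipschitzWith LV V)
    (hVmono : Monotone V) {lam : ℝ} (hlam : 0 ≤ lam) (hCFL : lam * LV ≤ 1) (a b : ℝ) :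
    |a - b - lam * (V a - V b)| ≤ |a - b| - lam * |V a - V b| := by
  wlog hba : b ≤ a generalizing a b
  · have := this b a (by linarith)
    rw [abs_sub_comm b a, abs_sub_comm (V b) (V a)] at this
    rwa [← abs_neg, show -(a - b - lam * (V a - V b)) = b - a - lam * (V b - V a) by ring]
  have hV : 0 ≤ V a - V b := sub_nonneg.2 (hVmono hba)
  have hlip : V a - V b ≤ LV * (a - b) := by
    simpa [Real.dist_eq, abs_of_nonneg hV, abs_of_nonneg (sub_nonneg.2 hba)] using
      hVlip.dist_le_mul a b
  have hstep : lam * (V a - V b) ≤ a - b := by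
    nlinarith [mul_le_mul_of_nonneg_left hlip hlam]
  rw [abs_of_nonneg (sub_nonneg.2 hba), abs_of_nonneg hV, abs_of_nonneg (sub_nonneg.2 hstep)]

namespace IsEulerFtL

variable {N : ℕ} {lam : ℝ} {V : ℝ → ℝ} {LV : NNReal} {y yt : ℕ → ℕ → ℝ}

theorem abs_sub_succ_le (hVlip : LipschitzWith LV V) (hVmono : Monotone V) (hlam : 0 ≤ lam)
    (hCFL : lam * LV ≤ 1) (hy : IsEulerFtL N lam V y) (hyt : IsEulerFtL N lam V yt)
    (n : ℕ) {i : ℕ} (hi : i ∈ Icc 1 (N - 1)) :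
    |y (n + 1) i - yt (n + 1) i| ≤ |y n i - yt n i|
      + lam * (|V (y n (i + 1)) - V (yt n (i + 1))| - |V (y n i) - V (yt n i)|) := by
  have hsplit : y (n + 1) i - yt (n + 1) i =
      (y n i - yt n i - lam * (V (y n i) - V (yt n i)))
        + lam * (V (y n (i + 1)) - V (yt n (i + 1))) := by
    rw [hy.2 n i hi, hyt.2 n i hi]; ring
  calc |y (n + 1) i - yt (n + 1) i|
      ≤ |y n i - yt n i - lam * (V (y n i) - V (yt n i))|
        + lam * |V (y n (i + 1)) - V (yt n (i + 1))| := by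
        rw [hsplit]
        exact (abs_add_le _ _).trans_eq (by rw [abs_mul, abs_of_nonneg hlam])
    _ ≤ _ := by
        have := abs_sub_sub_mul_sub_le hVlip hVmono hlam hCFL (y n i) (yt n i)
        linarith

theorem l1_dist_succ_le (hVlip : LipschitzWith LV V) (hVmono : Monotone V) (hlam : 0 ≤ lam)
    (hCFL : lam * LV ≤ 1) (hy : IsEulerFtL N lam V y) (hyt : IsEulerFtL N lam V yt) (n : ℕ) :
    ∑ i ∈ Icc 1 (N - 1), |y (n + 1) i - yt (n + 1) i| ≤ ∑ i ∈ Icc 1 (N - 1), |y n i - yt n i| := by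
  have hflux : ∑ i ∈ Icc 1 (N - 1),
      (|V (y n (i + 1)) - V (yt n (i + 1))| - |V (y n i) - V (yt n i)|) = 0 :=
    sum_Icc_sub_eq_zero_of_periodic (f := fun i ↦ |V (y n i) - V (yt n i)|)
      (by simp only [hy.1 n, hyt.1 n])
  calc ∑ i ∈ Icc 1 (N - 1), |y (n + 1) i - yt (n + 1) i|
      ≤ ∑ i ∈ Icc 1 (N - 1), (|y n i - yt n i|
          + lam * (|V (y n (i + 1)) - V (yt n (i + 1))| - |V (y n i) - V (yt n i)|)) :=
        sum_le_sum fun i hi ↦ abs_sub_succ_le hVlip hVmono hlam hCFL hy hyt n hi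
    _ = ∑ i ∈ Icc 1 (N - 1), |y n i - yt n i| := by
        rw [sum_add_distrib, ← mul_sum, hflux, mul_zero, add_zero]

end IsEulerFtL

theorem eulerFtL_l1_contraction_general
    (N : ℕ) (ℓ Δt : ℝ) (hℓ : 0 < ℓ) (hΔt : 0 < Δt)
    (V : ℝ → ℝ) (LV : NNReal) (hVlip : LipschitzWith LV V) (hVmono : Monotone V)
    (hCFL : Δt / ℓ * (LV : ℝ) ≤ 1)
    (y yt : ℕ → ℕ → ℝ)
    (hy : IsEulerFtL N (Δt / ℓ) V y) (hyt : IsEulerFtL N (Δt / ℓ) V yt) :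
    ∀ n : ℕ, ∑ i ∈ Finset.Icc 1 (N - 1), |y n i - yt n i| ≤
      ∑ i ∈ Finset.Icc 1 (N - 1), |y 0 i - yt 0 i| := by
  have hlam : 0 ≤ Δt / ℓ := by positivity
  have hanti : Antitone fun n ↦ ∑ i ∈ Icc 1 (N - 1), |y n i - yt n i| :=
    antitone_nat_of_succ_le (hy.l1_dist_succ_le hVlip hVmono hlam hCFL hyt)
  exact fun n ↦ hanti (Nat.zero_le n)

/-- Under the CFL condition, the periodic explicit Euler FtL scheme is an `ℓ¹`
contraction: `Σ_i |y_i^n − ỹ_i^n| ≤ Σ_i |y_i^0 − ỹ_i^0|` for every `n`. -/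
theorem eulerFtL_l1_contraction
    (N : ℕ) (hN : 2 ≤ N) (ℓ Δt : ℝ) (hℓ : 0 < ℓ) (hΔt : 0 < Δt)
    (V : ℝ → ℝ) (LV : NNReal) (hVlip : LipschitzWith LV V) (hVmono : Monotone V)
    (hCFL : Δt / ℓ * (LV : ℝ) ≤ 1)
    (y yt : ℕ → ℕ → ℝ)
    (hy : IsEulerFtL N (Δt / ℓ) V y) (hyt : IsEulerFtL N (Δt / ℓ) V yt) :
    ∀ n : ℕ, ∑ i ∈ Finset.Icc 1 (N - 1), |y n i - yt n i| ≤
      ∑ i ∈ Finset.Icc 1 (N - 1), |y 0 i - yt 0 i| :=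
  eulerFtL_l1_contraction_general N ℓ Δt hℓ hΔt V LV hVlip hVmono hCFL y yt hy hyt
end

section
/- Assume the CFL condition λ L_V ≤ 1. Then the periodic explicit Euler FtL scheme is total-variation diminishing: for every n ≥ 0, Σ_{i=1}^{N−1} |y_{i+1}^{n+1} − y_i^{n+1}| ≤ Σ_{i=1}^{N−1} |y_{i+1}^n − y_i^n|, where indices are taken cyclically (y_N^n := y_1^n). -/
/-!
Write one step of the scheme as `y_i^{n+1} = W(y_i^n) + G(y_{i+1}^n)` with `G = λV` and
`W = id - λV`. Both are nondecreasing: `G` because `V` is, `W` by the CFL condition. Hence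
the new increment is `ΔW_i + ΔG_{i+1}`, and since `W + G = id` with `W`, `G` monotone,
`|ΔW_i| + |ΔG_i| = |Δy_i|`. The triangle inequality and a cyclic shift of the `ΔG` terms
then give the TVD bound.
-/

open Finset

def cyclicSucc (m i : ℕ) : ℕ := if i = m then 1 else i + 1

theorem sum_Icc_comp_cyclicSucc {M : Type*} [AddCommMonoid M] (m : ℕ) (f : ℕ → M) :
    ∑ i ∈ Icc 1 m, f (cyclicSucc m i) = ∑ i ∈ Icc 1 m, f i := by
  refine sum_nbij' (cyclicSucc m) (fun i => if i = 1 then m else i - 1) ?_ ?_ ?_ ?_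
    fun _ _ => rfl <;>
  · intro i hi
    simp only [mem_Icc, cyclicSucc] at hi ⊢
    split_ifs <;> omega

theorem abs_sub_add_abs_sub_of_monotone {f g : ℝ → ℝ} (hf : Monotone f) (hg : Monotone g)
    (a b : ℝ) : |f b - f a| + |g b - g a| = |(f b + g b) - (f a + g a)| := by
  rw [show f b + g b - (f a + g a) = (f b - f a) + (g b - g a) by ring, eq_comm,
    abs_add_eq_add_abs_iff]
  rcases le_total a b with hab | hba
  · exact .inl ⟨sub_nonneg.2 (hf hab), sub_nonneg.2 (hg hab)⟩
  · exact .inr ⟨sub_nonpos.2 (hf hba), sub_nonpos.2 (hg hba)⟩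

theorem monotone_id_sub_mul_of_lipschitzWith {V : ℝ → ℝ} {K : NNReal} (hV : LipschitzWith K V)
    {lam : ℝ} (hlam : 0 ≤ lam) (hCFL : lam * K ≤ 1) : Monotone fun x => x - lam * V x := by
  intro a b hab
  have hVab : V b - V a ≤ K * (b - a) := by
    simpa [Real.dist_eq, abs_of_nonneg (sub_nonneg.2 hab)] using
      (le_abs_self _).trans (hV.dist_le_mul b a)
  have : lam * (V b - V a) ≤ b - a :=
    calc lam * (V b - V a) ≤ lam * (K * (b - a)) := mul_le_mul_of_nonneg_left hVab hlam
      _ = lam * K * (b - a) := by ring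
      _ ≤ b - a := mul_le_of_le_one_left (sub_nonneg.2 hab) hCFL
  show a - lam * V a ≤ b - lam * V b
  linarith

section MonotoneSplitting

variable {W G : ℝ → ℝ} {N : ℕ} {u v : ℕ → ℝ}

theorem sub_eq_sub_add_sub_cyclicSucc (hu : u N = u 1) (hv : v N = v 1)
    (hvu : ∀ i ∈ Icc 1 (N - 1), v i = W (u i) + G (u (i + 1))) {i : ℕ} (hi : i ∈ Icc 1 (N - 1)) :
    v (i + 1) - v i = (W (u (i + 1)) - W (u i)) +
      (G (u (cyclicSucc (N - 1) i + 1)) - G (u (cyclicSucc (N - 1) i))) := by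
  have hi' := mem_Icc.1 hi
  unfold cyclicSucc
  split_ifs with hlast
  · subst hlast
    have hN : N - 1 + 1 = N := by omega
    rw [hvu _ hi, hN, hv, hvu 1 (mem_Icc.2 ⟨le_rfl, hi'.1⟩), hu]
    ring
  · rw [hvu _ hi, hvu (i + 1) (mem_Icc.2 ⟨by omega, by omega⟩)]
    ring

theorem sum_abs_sub_le_of_monotone_split (hW : Monotone W) (hG : Monotone G) (hWG : ∀ x, W x + G x = x)
    (hu : u N = u 1) (hv : v N = v 1)
    (hvu : ∀ i ∈ Icc 1 (N - 1), v i = W (u i) + G (u (i + 1))) :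
    ∑ i ∈ Icc 1 (N - 1), |v (i + 1) - v i| ≤ ∑ i ∈ Icc 1 (N - 1), |u (i + 1) - u i| :=
  calc ∑ i ∈ Icc 1 (N - 1), |v (i + 1) - v i|
      = ∑ i ∈ Icc 1 (N - 1), |(W (u (i + 1)) - W (u i)) +
          (G (u (cyclicSucc (N - 1) i + 1)) - G (u (cyclicSucc (N - 1) i)))| :=
        sum_congr rfl fun i hi => by rw [sub_eq_sub_add_sub_cyclicSucc hu hv hvu hi]
    _ ≤ ∑ i ∈ Icc 1 (N - 1), (|W (u (i + 1)) - W (u i)| +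
          |G (u (cyclicSucc (N - 1) i + 1)) - G (u (cyclicSucc (N - 1) i))|) :=
        sum_le_sum fun _ _ => abs_add_le _ _
    _ = ∑ i ∈ Icc 1 (N - 1), (|W (u (i + 1)) - W (u i)| + |G (u (i + 1)) - G (u i)|) := by
        rw [sum_add_distrib, sum_add_distrib,
          sum_Icc_comp_cyclicSucc (N - 1) fun j => |G (u (j + 1)) - G (u j)|]
    _ = ∑ i ∈ Icc 1 (N - 1), |u (i + 1) - u i| :=
        sum_congr rfl fun i _ => by rw [abs_sub_add_abs_sub_of_monotone hW hG, hWG, hWG]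

end MonotoneSplitting

theorem eulerFtL_tvd_general
    (N : ℕ) (ℓ Δt : ℝ) (hℓ : 0 < ℓ) (hΔt : 0 < Δt)
    (V : ℝ → ℝ) (LV : NNReal) (hVlip : LipschitzWith LV V) (hVmono : Monotone V)
    (hCFL : Δt / ℓ * (LV : ℝ) ≤ 1)
    (y : ℕ → ℕ → ℝ) (hy : IsEulerFtL N (Δt / ℓ) V y) :
    ∀ n : ℕ, ∑ i ∈ Finset.Icc 1 (N - 1), |y (n + 1) (i + 1) - y (n + 1) i| ≤
      ∑ i ∈ Finset.Icc 1 (N - 1), |y n (i + 1) - y n i| := by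
  obtain ⟨hper, hstep⟩ := hy
  intro n
  have hlam : 0 ≤ Δt / ℓ := div_nonneg hΔt.le hℓ.le
  refine sum_abs_sub_le_of_monotone_split (W := fun x => x - Δt / ℓ * V x) (G := fun x => Δt / ℓ * V x)
    (monotone_id_sub_mul_of_lipschitzWith hVlip hlam hCFL) (hVmono.const_mul hlam)
    (fun x => sub_add_cancel _ _) (hper n) (hper (n + 1)) fun i hi => ?_
  rw [hstep n i hi]
  ring

/-- Under the CFL condition, the periodic explicit Euler FtL scheme is
total-variation diminishing (indices cyclic, `y_N^n := y_1^n`). -/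
theorem eulerFtL_tvd
    (N : ℕ) (hN : 2 ≤ N) (ℓ Δt : ℝ) (hℓ : 0 < ℓ) (hΔt : 0 < Δt)
    (V : ℝ → ℝ) (LV : NNReal) (hVlip : LipschitzWith LV V) (hVmono : Monotone V)
    (hCFL : Δt / ℓ * (LV : ℝ) ≤ 1)
    (y : ℕ → ℕ → ℝ) (hy : IsEulerFtL N (Δt / ℓ) V y) :
    ∀ n : ℕ, ∑ i ∈ Finset.Icc 1 (N - 1), |y (n + 1) (i + 1) - y (n + 1) i| ≤
      ∑ i ∈ Finset.Icc 1 (N - 1), |y n (i + 1) - y n i| :=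
  eulerFtL_tvd_general N ℓ Δt hℓ hΔt V LV hVlip hVmono hCFL y hy
end

section
/- Assume the CFL condition λ L_V ≤ 1, and let (y_i^n) be generated by the periodic explicit Euler FtL scheme. Then the discrete Kružkov entropy inequality holds: for every constant k ∈ ℝ, every n ≥ 0 and every i = 1,…,N−1, |y_i^{n+1} − k| ≤ |y_i^n − k| + λ[q(y_{i+1}^n, k) − q(y_i^n, k)], where q(y,k) = sgn(y − k)(V(y) − V(k)). -/
/-!
The update `H(a, b) = a + λ (V b − V a)` is nondecreasing in both arguments: in `b` because `V` is,
in `a` because `a − λ V a` is, by the CFL condition. Since constants are fixed points of `H`,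
monotonicity pinches `H(a, b)` and `k` between `H(a ⊓ k, b ⊓ k)` and `H(a ⊔ k, b ⊔ k)`
(Crandall–Majda), and the difference of these two bounds is exactly the right-hand side of the
entropy inequality, because `sgn(x − k) (V x − V k) = V (x ⊔ k) − V (x ⊓ k)`.
-/

open scoped NNReal

section Pinching

variable {α : Type*} [AddCommGroup α] [LinearOrder α] [IsOrderedAddMonoid α]

theorem abs_sub_le_sup_sub_inf_of_monotone {H : α → α → α}
    (hH : ∀ ⦃a₁ a₂ b₁ b₂⦄, a₁ ≤ a₂ → b₁ ≤ b₂ → H a₁ b₁ ≤ H a₂ b₂) {k : α} (hk : H k k = k)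
    (a b : α) : |H a b - k| ≤ H (a ⊔ k) (b ⊔ k) - H (a ⊓ k) (b ⊓ k) := by
  have hupper : H a b ≤ H (a ⊔ k) (b ⊔ k) := hH le_sup_left le_sup_left
  have hk_upper : k ≤ H (a ⊔ k) (b ⊔ k) := hk.ge.trans (hH le_sup_right le_sup_right)
  have hlower : H (a ⊓ k) (b ⊓ k) ≤ H a b := hH inf_le_left inf_le_left
  have hk_lower : H (a ⊓ k) (b ⊓ k) ≤ k := (hH inf_le_right inf_le_right).trans hk.le
  exact abs_sub_le_iff.2 ⟨sub_le_sub hupper hk_lower, sub_le_sub hk_upper hlower⟩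

end Pinching

theorem Real.sign_sub_mul_sub_eq_sup_sub_inf (V : ℝ → ℝ) (x k : ℝ) :
    Real.sign (x - k) * (V x - V k) = V (x ⊔ k) - V (x ⊓ k) := by
  rcases lt_trichotomy x k with h | rfl | h
  · rw [Real.sign_of_neg (sub_neg.2 h), sup_eq_right.2 h.le, inf_eq_left.2 h.le]; ring
  · simp
  · rw [Real.sign_of_pos (sub_pos.2 h), sup_eq_left.2 h.le, inf_eq_right.2 h.le]; ring

def ftlStep (lam : ℝ) (V : ℝ → ℝ) (a b : ℝ) : ℝ :=
  a + lam * (V b - V a)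

theorem ftlStep_self (lam : ℝ) (V : ℝ → ℝ) (k : ℝ) : ftlStep lam V k k = k := by
  simp [ftlStep]

theorem LipschitzWith.sub_le_mul_sub {K : ℝ≥0} {f : ℝ → ℝ} (hf : LipschitzWith K f) {x y : ℝ}
    (hxy : x ≤ y) : f y - f x ≤ K * (y - x) := by
  have := hf.dist_le_mul y x
  rw [Real.dist_eq, Real.dist_eq, abs_of_nonneg (sub_nonneg.2 hxy)] at this
  exact (le_abs_self _).trans this

theorem ftlStep_le_ftlStep {lam : ℝ} {V : ℝ → ℝ} {K : ℝ≥0} (hlam : 0 ≤ lam)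
    (hVmono : Monotone V) (hVlip : LipschitzWith K V) (hCFL : lam * K ≤ 1)
    ⦃a₁ a₂ b₁ b₂ : ℝ⦄ (ha : a₁ ≤ a₂) (hb : b₁ ≤ b₂) :
    ftlStep lam V a₁ b₁ ≤ ftlStep lam V a₂ b₂ := by
  have hdiag : lam * (V a₂ - V a₁) ≤ a₂ - a₁ :=
    calc lam * (V a₂ - V a₁) ≤ lam * (K * (a₂ - a₁)) :=
          mul_le_mul_of_nonneg_left (hVlip.sub_le_mul_sub ha) hlam
      _ = lam * K * (a₂ - a₁) := by ring
      _ ≤ a₂ - a₁ := mul_le_of_le_one_left (sub_nonneg.2 ha) hCFL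
  have hupwind : lam * V b₁ ≤ lam * V b₂ := mul_le_mul_of_nonneg_left (hVmono hb) hlam
  unfold ftlStep
  linarith

theorem eulerFtL_discrete_entropy_inequality_general
    (N : ℕ) (ℓ Δt : ℝ) (hℓ : 0 < ℓ) (hΔt : 0 < Δt)
    (V : ℝ → ℝ) (LV : NNReal) (hVlip : LipschitzWith LV V) (hVmono : Monotone V)
    (hCFL : Δt / ℓ * (LV : ℝ) ≤ 1)
    (y : ℕ → ℕ → ℝ) (hy : IsEulerFtL N (Δt / ℓ) V y)
    (k : ℝ) :
    ∀ n : ℕ, ∀ i ∈ Finset.Icc 1 (N - 1),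
      |y (n + 1) i - k| ≤ |y n i - k| +
        Δt / ℓ * (Real.sign (y n (i + 1) - k) * (V (y n (i + 1)) - V k)
          - Real.sign (y n i - k) * (V (y n i) - V k)) := by
  intro n i hi
  have hstep : y (n + 1) i = ftlStep (Δt / ℓ) V (y n i) (y n (i + 1)) := hy.2 n i hi
  have hmono := ftlStep_le_ftlStep (div_pos hΔt hℓ).le hVmono hVlip hCFL
  calc |y (n + 1) i - k|
      ≤ ftlStep (Δt / ℓ) V (y n i ⊔ k) (y n (i + 1) ⊔ k)
          - ftlStep (Δt / ℓ) V (y n i ⊓ k) (y n (i + 1) ⊓ k) :=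
        hstep ▸ abs_sub_le_sup_sub_inf_of_monotone hmono (ftlStep_self _ V k) _ _
    _ = _ := by
        simp only [ftlStep, Real.sign_sub_mul_sub_eq_sup_sub_inf, ← max_sub_min_eq_abs']
        ring

/-- Discrete Kružkov entropy inequality for the periodic explicit Euler FtL
scheme: `|y_i^{n+1} − k| ≤ |y_i^n − k| + λ(q(y_{i+1}^n,k) − q(y_i^n,k))` with
`q(y,k) = sgn(y − k)(V(y) − V(k))`. -/
theorem eulerFtL_discrete_entropy_inequality
    (N : ℕ) (hN : 2 ≤ N) (ℓ Δt : ℝ) (hℓ : 0 < ℓ) (hΔt : 0 < Δt)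
    (V : ℝ → ℝ) (LV : NNReal) (hVlip : LipschitzWith LV V) (hVmono : Monotone V)
    (hCFL : Δt / ℓ * (LV : ℝ) ≤ 1)
    (y : ℕ → ℕ → ℝ) (hy : IsEulerFtL N (Δt / ℓ) V y)
    (k : ℝ) :
    ∀ n : ℕ, ∀ i ∈ Finset.Icc 1 (N - 1),
      |y (n + 1) i - k| ≤ |y n i - k| +
        Δt / ℓ * (Real.sign (y n (i + 1) - k) * (V (y n (i + 1)) - V k)
          - Real.sign (y n i - k) * (V (y n i) - V k)) :=
  eulerFtL_discrete_entropy_inequality_general N ℓ Δt hℓ hΔt V LV hVlip hVmono hCFL y hy k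
end

section
/- Forward Euler preserves the safety ordering of vehicles: let v : ℝ → ℝ be nonincreasing with v(ρ) = 0 for ρ ≥ 1, suppose y ↦ v(1/y) is Lipschitz on [1,∞) with constant L, and assume Δt · L ≤ ℓ. Let positions be updated by z_i^{n+1} = z_i^n + Δt · v(ℓ/(z_{i+1}^n − z_i^n)) for i = 1,…,N−1 together with z_N^{n+1} = z_N^n + Δt · v(ℓ/g_N^n), where g_N^n ≥ ℓ denotes the gap ahead of the leading vehicle (g_N^n = M ℓ with M ≥ 1 in the non-periodic case). If z_i^0 + ℓ ≤ z_{i+1}^0 for all i = 1,…,N−1, then z_i^n + ℓ ≤ z_{i+1}^n for all i = 1,…,N−1 and all n ≥ 0. -/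
/-!
Write `w y = v (ℓ / y)` for the speed of a vehicle facing a gap `y ≥ ℓ`. One Euler step turns the
gap `a` of a vehicle whose leader faces the gap `b` into `a + Δt (w b - w a)`. If `a ≤ b` this is
at least `a`, because `w` is nondecreasing; if `b ≤ a`, then `w` is `L / ℓ`-Lipschitz and
`Δt L ≤ ℓ` give `Δt (w a - w b) ≤ a - b`, so the new gap is at least `b`. Either way it stays
`≥ min a b ≥ ℓ`, and induction on the time step does the rest.
-/

section GapStep

variable {ℓ Δt L : ℝ} {v : ℝ → ℝ} {a b : ℝ}

lemma velocity_sub_le_of_lipschitz (hℓ : 0 < ℓ)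
    (hlip : ∀ a b : ℝ, 1 ≤ a → 1 ≤ b → |v (1 / a) - v (1 / b)| ≤ L * |a - b|)
    (hb : ℓ ≤ b) (hba : b ≤ a) :
    v (ℓ / a) - v (ℓ / b) ≤ L / ℓ * (a - b) := by
  have h := hlip (a / ℓ) (b / ℓ) ((one_le_div hℓ).2 (hb.trans hba)) ((one_le_div hℓ).2 hb)
  rw [one_div_div, one_div_div, ← sub_div, abs_div, abs_of_pos hℓ,
    abs_of_nonneg (sub_nonneg.2 hba)] at h
  calc v (ℓ / a) - v (ℓ / b) ≤ |v (ℓ / a) - v (ℓ / b)| := le_abs_self _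
    _ ≤ L * ((a - b) / ℓ) := h
    _ = L / ℓ * (a - b) := by ring

lemma min_le_gap_euler_step (hℓ : 0 < ℓ) (hΔt : 0 < Δt) (hmono : Antitone v)
    (hlip : ∀ a b : ℝ, 1 ≤ a → 1 ≤ b → |v (1 / a) - v (1 / b)| ≤ L * |a - b|)
    (hCFL : Δt * L ≤ ℓ) (ha : ℓ ≤ a) (hb : ℓ ≤ b) :
    min a b ≤ a + Δt * (v (ℓ / b) - v (ℓ / a)) := by
  rcases le_total a b with hab | hba
  · have hv : v (ℓ / a) ≤ v (ℓ / b) :=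
      hmono (div_le_div_of_nonneg_left hℓ.le (hℓ.trans_le ha) hab)
    have : 0 ≤ Δt * (v (ℓ / b) - v (ℓ / a)) := mul_nonneg hΔt.le (sub_nonneg.2 hv)
    linarith [min_le_left a b]
  · have hv := velocity_sub_le_of_lipschitz hℓ hlip hb hba
    have hdrift : Δt * (v (ℓ / a) - v (ℓ / b)) ≤ a - b :=
      calc Δt * (v (ℓ / a) - v (ℓ / b)) ≤ Δt * (L / ℓ * (a - b)) :=
            mul_le_mul_of_nonneg_left hv hΔt.le
        _ = Δt * L / ℓ * (a - b) := by ring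
        _ ≤ 1 * (a - b) :=
            mul_le_mul_of_nonneg_right ((div_le_one hℓ).2 hCFL) (sub_nonneg.2 hba)
        _ = a - b := one_mul _
    linarith [min_le_right a b]

end GapStep

theorem eulerFtL_no_collision_general
    (N : ℕ) (ℓ Δt L : ℝ) (hℓ : 0 < ℓ) (hΔt : 0 < Δt)
    (v : ℝ → ℝ) (hmono : Antitone v)
    (hlip : ∀ a b : ℝ, 1 ≤ a → 1 ≤ b → |v (1 / a) - v (1 / b)| ≤ L * |a - b|)
    (hCFL : Δt * L ≤ ℓ)
    (z : ℕ → ℕ → ℝ) (g : ℕ → ℝ) (hg : ∀ n : ℕ, ℓ ≤ g n)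
    (hupd : ∀ n : ℕ, ∀ i ∈ Finset.Icc 1 (N - 1),
      z (n + 1) i = z n i + Δt * v (ℓ / (z n (i + 1) - z n i)))
    (hupdN : ∀ n : ℕ, z (n + 1) N = z n N + Δt * v (ℓ / g n))
    (h0 : ∀ i ∈ Finset.Icc 1 (N - 1), z 0 i + ℓ ≤ z 0 (i + 1)) :
    ∀ n : ℕ, ∀ i ∈ Finset.Icc 1 (N - 1), z n i + ℓ ≤ z n (i + 1) := by
  intro n
  induction n with
  | zero => exact h0
  | succ n ih =>
    intro i hi
    obtain ⟨hi1, hi2⟩ := Finset.mem_Icc.1 hi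
    obtain ⟨b, hb, hleader⟩ :
        ∃ b, ℓ ≤ b ∧ z (n + 1) (i + 1) = z n (i + 1) + Δt * v (ℓ / b) := by
      rcases hi2.lt_or_eq with hlt | heq
      · have hi' : i + 1 ∈ Finset.Icc 1 (N - 1) := Finset.mem_Icc.2 ⟨by omega, hlt⟩
        exact ⟨_, le_sub_iff_add_le'.2 (ih (i + 1) hi'), hupd n (i + 1) hi'⟩
      · exact ⟨g n, hg n, by rw [show i + 1 = N by omega]; exact hupdN n⟩
    have ha : ℓ ≤ z n (i + 1) - z n i := le_sub_iff_add_le'.2 (ih i hi)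
    have hstep := min_le_gap_euler_step hℓ hΔt hmono hlip hCFL ha hb
    rw [hupd n i hi, hleader]
    linarith [le_min ha hb]

/-- Forward Euler preserves the safety ordering of vehicles: under the CFL-type
condition `Δt · L ≤ ℓ`, if initially `z_i^0 + ℓ ≤ z_{i+1}^0` for all
`i = 1,…,N−1`, then `z_i^n + ℓ ≤ z_{i+1}^n` for all `i` and all `n`. Here the
positions are updated by `z_i^{n+1} = z_i^n + Δt · v(ℓ/(z_{i+1}^n − z_i^n))`
for `i = 1,…,N−1`, and the leading vehicle by
`z_N^{n+1} = z_N^n + Δt · v(ℓ/g_N^n)` with gap `g_N^n ≥ ℓ` ahead of it. -/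
theorem eulerFtL_no_collision
    (N : ℕ) (hN : 2 ≤ N) (ℓ Δt L : ℝ) (hℓ : 0 < ℓ) (hΔt : 0 < Δt)
    (v : ℝ → ℝ) (hmono : Antitone v) (hzero : ∀ ρ : ℝ, 1 ≤ ρ → v ρ = 0)
    (hlip : ∀ a b : ℝ, 1 ≤ a → 1 ≤ b → |v (1 / a) - v (1 / b)| ≤ L * |a - b|)
    (hCFL : Δt * L ≤ ℓ)
    (z : ℕ → ℕ → ℝ) (g : ℕ → ℝ) (hg : ∀ n : ℕ, ℓ ≤ g n)
    (hupd : ∀ n : ℕ, ∀ i ∈ Finset.Icc 1 (N - 1),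
      z (n + 1) i = z n i + Δt * v (ℓ / (z n (i + 1) - z n i)))
    (hupdN : ∀ n : ℕ, z (n + 1) N = z n N + Δt * v (ℓ / g n))
    (h0 : ∀ i ∈ Finset.Icc 1 (N - 1), z 0 i + ℓ ≤ z 0 (i + 1)) :
    ∀ n : ℕ, ∀ i ∈ Finset.Icc 1 (N - 1), z n i + ℓ ≤ z n (i + 1) :=
  eulerFtL_no_collision_general N ℓ Δt L hℓ hΔt v hmono hlip hCFL z g hg hupd hupdN h0
end
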